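/- arXiv:2504.04354 — 6 statements merged into one kernel-verified Lean document; each statement's English description precedes it below -/
import Mathlib

section
/- Let G be a graph on n vertices that does not contain the complete graph K_r as a subgraph. Then the number of edges of G is at most (1/2)·(1 - 1/(r-1))·n². -/
open Finset SimpleGraph

/-- Turán's theorem: if a graph `G` on `n` vertices contains no copy of `K_r`,
then its number of edges is at most `(1/2)·(1 - 1/(r-1))·n²`. -/
theorem turan_bound {V : Type*} [Fintype V] (G : SimpleGraph V) [DecidableRel G.Adj]
    (r : ℕ) (h : G.CliqueFree r) :
    (G.edgeFinset.card : ℝ) ≤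
      (1 / 2) * (1 - 1 / ((r : ℝ) - 1)) * (Fintype.card V : ℝ) ^ 2 := by
  classical
  match r with
  | 0 => exact absurd (h ∅) (by simp)
  | 1 =>
    have hV : Fintype.card V = 0 := by
      by_contra hne
      obtain ⟨v⟩ := Fintype.card_pos_iff.mp (Nat.pos_of_ne_zero hne)
      exact h {v} (by simp)
    have h2 : G.edgeFinset.card = 0 := by
      have := G.card_edgeFinset_le_card_choose_two
      rw [hV] at this
      simpa using this
    rw [hV, h2]
    norm_num
  | (k+2) =>
    obtain ⟨H, hd, hH⟩ := SimpleGraph.exists_isTuranMaximal (V := V) (r := k+1) (Nat.succ_pos k)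
    have hGH : G.edgeFinset.card ≤ H.edgeFinset.card := hH.2 h
    set n := Fintype.card V with hn
    have fpeq : hH.finpartition = hH.finpartition := rfl
    set S := ∑ s : V, (hH.finpartition.part s).card with hSdef
    -- key identity: 2E + S = n²
    have key : 2 * H.edgeFinset.card + S = n * n := by
      rw [← H.sum_degrees_eq_twice_card_edges, hSdef, ← Finset.sum_add_distrib]
      have : ∀ s : V, H.degree s + (hH.finpartition.part s).card = n := by
        intro s
        rw [hH.degree_eq_card_sub_part_card]
        have hle : (hH.finpartition.part s).card ≤ n := by
          have hm := hH.finpartition.part_mem.mpr (Finset.mem_univ s)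
          exact (Finset.card_le_card (hH.finpartition.le hm)).trans_eq (by simp [hn])
        omega
      simp [this, Finset.sum_const, Finset.card_univ, ← hn]
    -- S as sum of squares of part sizes
    have hS : S = ∑ P ∈ hH.finpartition.parts, P.card * P.card := by
      have e1 : S = ∑ s ∈ hH.finpartition.parts.biUnion id, (hH.finpartition.part s).card :=
        Finset.sum_congr hH.finpartition.biUnion_parts.symm (fun _ _ => rfl)
      rw [e1, Finset.sum_biUnion (hH.finpartition.supIndep.pairwiseDisjoint)]
      refine Finset.sum_congr rfl fun P hP => ?_
      calc ∑ s ∈ P, (hH.finpartition.part s).card = ∑ _s ∈ P, P.card :=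
            Finset.sum_congr rfl fun s hs => by rw [hH.finpartition.part_eq_of_mem hP hs]
        _ = P.card * P.card := by rw [Finset.sum_const, smul_eq_mul]
    -- Cauchy–Schwarz: n² ≤ (k+1) * S
    have cauchy : (n : ℝ) ^ 2 ≤ ((k : ℝ) + 1) * S := by
      have h1 : (∑ P ∈ hH.finpartition.parts, (P.card : ℝ)) = n := by
        rw [← Nat.cast_sum]
        norm_cast
        rw [hH.finpartition.sum_card_parts]
        simp [hn]
      have h2 : (∑ P ∈ hH.finpartition.parts, (P.card : ℝ)) ^ 2 ≤
          (hH.finpartition.parts.card : ℝ) * ∑ P ∈ hH.finpartition.parts, (P.card : ℝ) ^ 2 :=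
        sq_sum_le_card_mul_sum_sq
      have h3 : (hH.finpartition.parts.card : ℝ) ≤ (k : ℝ) + 1 := by
        have := hH.card_parts_le
        exact_mod_cast this.trans (le_refl _)
      have h4 : (∑ P ∈ hH.finpartition.parts, (P.card : ℝ) ^ 2) = (S : ℝ) := by
        rw [hS]
        push_cast
        exact Finset.sum_congr rfl fun P _ => by ring
      rw [h1, h4] at h2
      have hS0 : (0 : ℝ) ≤ (S : ℝ) := Nat.cast_nonneg _
      nlinarith
    -- finish over ℝ
    have keyR : 2 * (H.edgeFinset.card : ℝ) + (S : ℝ) = (n : ℝ) ^ 2 := by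
      have := congrArg (Nat.cast (R := ℝ)) key
      push_cast at this
      nlinarith [this]
    have hm0 : (0 : ℝ) < (k : ℝ) + 1 := by positivity
    have hcast : ((k + 2 : ℕ) : ℝ) - 1 = (k : ℝ) + 1 := by push_cast; ring
    rw [hcast, show (1 : ℝ) / 2 * (1 - 1 / ((k : ℝ) + 1)) * (n : ℝ) ^ 2 =
      (((k : ℝ) + 1) * (n : ℝ) ^ 2 - (n : ℝ) ^ 2) / (2 * ((k : ℝ) + 1)) by field_simp,
      le_div_iff₀ (by positivity)]
    have hGH' : (G.edgeFinset.card : ℝ) ≤ (H.edgeFinset.card : ℝ) := by exact_mod_cast hGH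
    nlinarith [cauchy, keyR, hGH', hm0]
end

section
/- Let G be a graph on n vertices that does not contain the complete bipartite graph K_{s,t} as a subgraph, where s ≤ t. Then the number of edges of G is at most (t-1)^{1/s}·n^{2-1/s} + (s-1)·n. -/
open Finset

lemma kst_pow_le_descFactorial (d : ℕ) : ∀ s : ℕ, (d + 1 - s) ^ s ≤ d.descFactorial s := by
  intro s
  induction s with
  | zero => simp
  | succ k ih =>
    rw [Nat.descFactorial_succ, pow_succ]
    have h1 : d + 1 - (k + 1) = d - k := by omega
    rw [h1]
    calc (d - k) ^ k * (d - k) ≤ (d + 1 - k) ^ k * (d - k) := by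
          gcongr; omega
      _ ≤ d.descFactorial k * (d - k) := by gcongr
      _ = (d - k) * d.descFactorial k := mul_comm _ _

lemma kst_cast_sub_le (m n : ℕ) : (m : ℝ) - (n : ℝ) ≤ ((m - n : ℕ) : ℝ) := by
  rcases le_total n m with hle | hle
  · rw [Nat.cast_sub hle]
  · have h1 : m - n = 0 := by omega
    rw [h1]
    have : (m : ℝ) ≤ (n : ℝ) := by exact_mod_cast hle
    simpa using this

set_option maxRecDepth 20000 in
lemma kst_count {V : Type*} [Fintype V] [DecidableEq V] (G : SimpleGraph V) [DecidableRel G.Adj]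
    (s t : ℕ) (ht : 1 ≤ t)
    (h : ∀ S T : Finset V, Disjoint S T → S.card = s → T.card = t →
      ¬ (∀ a ∈ S, ∀ b ∈ T, G.Adj a b)) :
    ∑ v : V, (G.degree v).choose s ≤ (t - 1) * (Fintype.card V).choose s := by
  have key : ∀ v : V, (G.neighborFinset v).powersetCard s
      = (Finset.univ.powersetCard s).filter (fun S => S ⊆ G.neighborFinset v) := by
    intro v
    ext S
    simp only [Finset.mem_powersetCard, Finset.mem_filter]
    exact ⟨fun ⟨h1, h2⟩ => ⟨⟨Finset.subset_univ S, h2⟩, h1⟩, fun ⟨⟨_, h2⟩, h1⟩ => ⟨h1, h2⟩⟩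
  calc ∑ v : V, (G.degree v).choose s
      = ∑ v : V, ((G.neighborFinset v).powersetCard s).card := by
        refine Finset.sum_congr rfl fun v _ => ?_
        rw [Finset.card_powersetCard, SimpleGraph.card_neighborFinset_eq_degree]
    _ = ∑ v : V, ((Finset.univ.powersetCard s).filter
          (fun S => S ⊆ G.neighborFinset v)).card := by
        refine Finset.sum_congr rfl fun v _ => ?_
        rw [key v]
    _ = ∑ v : V, ∑ S ∈ Finset.univ.powersetCard s,
          (if S ⊆ G.neighborFinset v then 1 else 0) := by
        refine Finset.sum_congr rfl fun v _ => ?_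
        rw [Finset.card_filter]
    _ = ∑ S ∈ Finset.univ.powersetCard s, ∑ v : V,
          (if S ⊆ G.neighborFinset v then 1 else 0) := Finset.sum_comm
    _ = ∑ S ∈ Finset.univ.powersetCard s,
          (Finset.univ.filter (fun v => S ⊆ G.neighborFinset v)).card := by
        refine Finset.sum_congr rfl fun S _ => ?_
        rw [Finset.card_filter]
    _ ≤ ∑ _S ∈ Finset.univ.powersetCard s, (t - 1) := by
        apply Finset.sum_le_sum
        intro S hS
        by_contra hlt
        push_neg at hlt
        have hts : t ≤ (Finset.univ.filter (fun v => S ⊆ G.neighborFinset v)).card := by omega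
        obtain ⟨T, hTsub, hTcard⟩ := Finset.exists_subset_card_eq hts
        have hScard : S.card = s := (Finset.mem_powersetCard.mp hS).2
        refine h S T ?_ hScard hTcard ?_
        · rw [Finset.disjoint_left]
          intro x hxS hxT
          have hx := Finset.mem_filter.mp (hTsub hxT)
          exact G.irrefl ((SimpleGraph.mem_neighborFinset G x x).mp (hx.2 hxS))
        · intro a ha b hb
          have hb' := Finset.mem_filter.mp (hTsub hb)
          exact ((SimpleGraph.mem_neighborFinset G b a).mp (hb'.2 ha)).symm
    _ = (t - 1) * (Fintype.card V).choose s := by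
        rw [Finset.sum_const, smul_eq_mul, Finset.card_powersetCard, Finset.card_univ,
          mul_comm]

/-- Kővári–Sós–Turán theorem: if a graph `G` on `n` vertices contains no copy of
`K_{s,t}` (with `s ≤ t`), i.e. there are no disjoint vertex sets `S`, `T` with
`|S| = s`, `|T| = t` and every vertex of `S` adjacent to every vertex of `T`,
then `G` has at most `(t-1)^{1/s}·n^{2-1/s} + (s-1)·n` edges. -/
theorem kovari_sos_turan {V : Type*} [Fintype V] (G : SimpleGraph V) [DecidableRel G.Adj]
    (s t : ℕ) (hst : s ≤ t)
    (h : ∀ S T : Finset V, Disjoint S T → S.card = s → T.card = t →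
      ¬ (∀ a ∈ S, ∀ b ∈ T, G.Adj a b)) :
    (G.edgeFinset.card : ℝ) ≤
      ((t : ℝ) - 1) ^ ((1 : ℝ) / s) * (Fintype.card V : ℝ) ^ ((2 : ℝ) - 1 / s)
        + ((s : ℝ) - 1) * (Fintype.card V : ℝ) := by
  classical
  set n := Fintype.card V with hn
  rcases Nat.eq_zero_or_pos s with rfl | hs
  · -- s = 0 case: bound is n^2 - n
    simp only [Nat.cast_zero, div_zero, Real.rpow_zero, one_mul, zero_sub, sub_zero]
    have h2 : G.edgeFinset.card ≤ n.choose 2 := SimpleGraph.card_edgeFinset_le_card_choose_two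
    have h3 : n.choose 2 ≤ n * (n - 1) := by
      calc n.choose 2 ≤ n.descFactorial 2 := Nat.choose_le_descFactorial n 2
        _ = n * (n - 1) := by simp [Nat.descFactorial_succ]; ring
    have h5 : (n : ℝ) ^ (2 : ℝ) = (n : ℝ) * (n : ℝ) := by rw [Real.rpow_two]; ring
    rcases Nat.eq_zero_or_pos n with h0 | hn1
    · have he : G.edgeFinset.card = 0 := by
        rw [h0] at h2; simpa using h2
      rw [he, h5, h0]
      norm_num
    · have h4 : (G.edgeFinset.card : ℝ) ≤ (n : ℝ) * ((n : ℝ) - 1) := by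
        calc (G.edgeFinset.card : ℝ) ≤ ((n * (n - 1) : ℕ) : ℝ) := by
              exact_mod_cast le_trans h2 h3
          _ = (n : ℝ) * ((n : ℝ) - 1) := by
              rw [Nat.cast_mul, Nat.cast_sub hn1, Nat.cast_one]
      rw [h5]
      nlinarith [h4]
  have ht : 1 ≤ t := le_trans hs hst
  have key := kst_count G s t ht h
  rw [← hn] at key
  -- real-valued degree bound
  set a : V → ℝ := fun v => ((G.degree v + 1 - s : ℕ) : ℝ) with ha
  have ha_nonneg : ∀ v ∈ Finset.univ, (0:ℝ) ≤ a v := fun v _ => Nat.cast_nonneg _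
  have hpow : ∀ v : V, a v ^ s ≤ ((s.factorial * (G.degree v).choose s : ℕ) : ℝ) := by
    intro v
    have h1 : ((G.degree v + 1 - s : ℕ) : ℝ) ^ s ≤ (((G.degree v).descFactorial s : ℕ) : ℝ) := by
      exact_mod_cast kst_pow_le_descFactorial (G.degree v) s
    calc a v ^ s = ((G.degree v + 1 - s : ℕ) : ℝ) ^ s := rfl
      _ ≤ (((G.degree v).descFactorial s : ℕ) : ℝ) := h1
      _ = ((s.factorial * (G.degree v).choose s : ℕ) : ℝ) := by
          rw [Nat.descFactorial_eq_factorial_mul_choose]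
  have hfacpow : s.factorial * n.choose s ≤ n ^ s := by
    rw [← Nat.descFactorial_eq_factorial_mul_choose]
    exact Nat.descFactorial_le_pow n s
  have hsum_pow : ∑ v : V, a v ^ s ≤ ((t - 1 : ℕ) : ℝ) * (n : ℝ) ^ s := by
    calc ∑ v : V, a v ^ s ≤ ∑ v : V, ((s.factorial * (G.degree v).choose s : ℕ) : ℝ) :=
          Finset.sum_le_sum (fun v _ => hpow v)
      _ = ((s.factorial * ∑ v : V, (G.degree v).choose s : ℕ) : ℝ) := by
          push_cast [Finset.mul_sum]; ring
      _ ≤ ((s.factorial * ((t - 1) * n.choose s) : ℕ) : ℝ) := by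
          exact_mod_cast Nat.mul_le_mul_left s.factorial key
      _ = (((t - 1) * (s.factorial * n.choose s) : ℕ) : ℝ) := by
          push_cast; ring
      _ ≤ (((t - 1) * n ^ s : ℕ) : ℝ) := by
          exact_mod_cast Nat.mul_le_mul_left (t - 1) hfacpow
      _ = ((t - 1 : ℕ) : ℝ) * (n : ℝ) ^ s := by push_cast; ring
  have hdeg : (2 * G.edgeFinset.card : ℝ) - ((s:ℝ) - 1) * n ≤ ∑ v : V, a v := by
    have h1 : ∀ v : V, (G.degree v : ℝ) - ((s:ℝ) - 1) ≤ a v := by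
      intro v
      have h2 := kst_cast_sub_le (G.degree v + 1) s
      have h3 : a v = ((G.degree v + 1 - s : ℕ) : ℝ) := rfl
      rw [h3]
      push_cast at h2
      linarith
    calc (2 * G.edgeFinset.card : ℝ) - ((s:ℝ) - 1) * n
        = ∑ v : V, ((G.degree v : ℝ) - ((s:ℝ) - 1)) := by
          rw [Finset.sum_sub_distrib, Finset.sum_const, Finset.card_univ, ← hn]
          have hd : ∑ v : V, (G.degree v : ℝ) = (2 * G.edgeFinset.card : ℝ) := by
            exact_mod_cast congrArg (Nat.cast (R := ℝ))
              (SimpleGraph.sum_degrees_eq_twice_card_edges G)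
          rw [hd]; ring
      _ ≤ ∑ v : V, a v := Finset.sum_le_sum (fun v _ => h1 v)
  set A : ℝ := 2 * G.edgeFinset.card - ((s:ℝ) - 1) * n with hA
  have hT1 : (0:ℝ) ≤ ((t : ℝ) - 1) ^ ((1 : ℝ) / s) * (n : ℝ) ^ ((2 : ℝ) - 1 / s) := by
    apply mul_nonneg
    · apply Real.rpow_nonneg
      have h1 : (1:ℝ) ≤ (t:ℝ) := by exact_mod_cast ht
      linarith
    · exact Real.rpow_nonneg (Nat.cast_nonneg n) _
  have he0 : (0:ℝ) ≤ (G.edgeFinset.card : ℝ) := Nat.cast_nonneg _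
  have hs1 : (1:ℝ) ≤ (s:ℝ) := by exact_mod_cast hs
  have hn0 : (0:ℝ) ≤ (n:ℝ) := Nat.cast_nonneg _
  rcases le_or_gt A 0 with hA0 | hA0
  · -- 2e ≤ (s-1)n, done
    rw [hA] at hA0
    nlinarith [hT1]
  -- main case: A > 0, hence n ≥ 1
  have hn1 : 1 ≤ n := by
    by_contra hcon
    push_neg at hcon
    have h0 : n = 0 := by omega
    have h2 : G.edgeFinset.card ≤ n.choose 2 := SimpleGraph.card_edgeFinset_le_card_choose_two
    rw [h0] at h2
    have he : G.edgeFinset.card = 0 := by simpa using h2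
    rw [hA, he, h0] at hA0
    norm_num at hA0
  have hnpos : (0:ℝ) < (n:ℝ) := by exact_mod_cast hn1
  -- power mean
  have hpm : (∑ v : V, a v) ^ s ≤ (n:ℝ) ^ (s - 1) * ∑ v : V, a v ^ s := by
    obtain ⟨k, rfl⟩ : ∃ k, s = k + 1 := ⟨s - 1, by omega⟩
    have h1 := pow_sum_div_card_le_sum_pow (s := (Finset.univ : Finset V)) (f := a)
      ha_nonneg k
    rw [Finset.card_univ, ← hn] at h1
    have hnk : (0:ℝ) < (n:ℝ) ^ k := pow_pos hnpos k
    rw [div_le_iff₀ hnk] at h1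
    simpa [Nat.add_sub_cancel, mul_comm] using h1
  have hAs : A ^ s ≤ ((t - 1 : ℕ) : ℝ) * (n:ℝ) ^ (2 * s - 1) := by
    calc A ^ s ≤ (∑ v : V, a v) ^ s := by
          exact pow_le_pow_left₀ (le_of_lt hA0) hdeg s
      _ ≤ (n:ℝ) ^ (s - 1) * (((t - 1 : ℕ) : ℝ) * (n : ℝ) ^ s) := by
          apply le_trans hpm
          gcongr
      _ = ((t - 1 : ℕ) : ℝ) * (n:ℝ) ^ (2 * s - 1) := by
          rw [show 2 * s - 1 = (s - 1) + s by omega, pow_add]; ring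
  have hAle : A ≤ ((t : ℝ) - 1) ^ ((1 : ℝ) / s) * (n : ℝ) ^ ((2 : ℝ) - 1 / s) := by
    have hsne : s ≠ 0 := by omega
    have ht1 : (0:ℝ) ≤ ((t - 1 : ℕ) : ℝ) := Nat.cast_nonneg _
    have step1 : A = (A ^ s) ^ ((s:ℝ)⁻¹) :=
      (Real.pow_rpow_inv_natCast (le_of_lt hA0) hsne).symm
    rw [step1]
    have step2 : (A ^ s) ^ ((s:ℝ)⁻¹)
        ≤ (((t - 1 : ℕ) : ℝ) * (n:ℝ) ^ (2 * s - 1)) ^ ((s:ℝ)⁻¹) := by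
      apply Real.rpow_le_rpow (pow_nonneg (le_of_lt hA0) s) hAs
      positivity
    apply le_trans step2
    rw [Real.mul_rpow ht1 (by positivity)]
    apply le_of_eq
    congr 1
    · rw [Nat.cast_sub ht, Nat.cast_one, one_div]
    · rw [← Real.rpow_natCast (n:ℝ) (2 * s - 1), ← Real.rpow_mul hnpos.le]
      congr 1
      rw [Nat.cast_sub (by omega : 1 ≤ 2 * s)]
      have hs0 : (s:ℝ) ≠ 0 := by positivity
      push_cast
      field_simp
  rw [hA] at hAle
  nlinarith [hAle, hT1]
end

section
/- Gallagher's larger sieve: Let N be a positive integer, A ⊆ {1,…,N}, and P a set of primes. For each p ∈ P let A_p denote the image of A modulo p. For any real Q with 1 < Q ≤ N, if ∑_{p ≤ Q, p ∈ P} (log p)/|A_p| − log N > 0, then |A| ≤ (∑_{p ≤ Q, p ∈ P} log p − log N) / (∑_{p ≤ Q, p ∈ P} (log p)/|A_p| − log N). -/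
open Finset

private lemma gls_card_pairs (A : Finset ℕ) (p : ℕ) :
    ((A ×ˢ A).filter (fun x : ℕ × ℕ => x.1 % p = x.2 % p)).card
      = ∑ r ∈ A.image (· % p), ((A.filter (· % p = r)).card)^2 := by
  classical
  rw [Finset.card_eq_sum_card_fiberwise (f := fun x : ℕ × ℕ => x.1 % p)
      (t := A.image (· % p)) (by
        intro x hx
        simp only [Finset.mem_coe, Finset.mem_filter, Finset.mem_product] at hx
        exact Finset.mem_image_of_mem _ hx.1.1)]
  refine Finset.sum_congr rfl fun r _ => ?_
  rw [sq, ← Finset.card_product]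
  congr 1
  ext x
  simp only [Finset.mem_filter, Finset.mem_product]
  constructor
  · rintro ⟨⟨⟨h1, h2⟩, he⟩, hr⟩
    exact ⟨⟨h1, hr⟩, h2, he ▸ hr⟩
  · rintro ⟨⟨h1, hr1⟩, h2, hr2⟩
    exact ⟨⟨⟨h1, h2⟩, hr1.trans hr2.symm⟩, hr1⟩

/-- Gallagher's larger sieve: for `A ⊆ {1,…,N}`, a set `P` of primes, and
`1 < Q ≤ N`, if `∑_{p ≤ Q, p ∈ P} (log p)/|A mod p| − log N > 0`, then
`|A| ≤ (∑_{p ≤ Q, p ∈ P} log p − log N) / (∑_{p ≤ Q, p ∈ P} (log p)/|A mod p| − log N)`. -/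
theorem gallagher_larger_sieve (N : ℕ) (hN : 0 < N) (A : Finset ℕ)
    (hA : A ⊆ Finset.Icc 1 N) (P : Finset ℕ) (hP : ∀ p ∈ P, p.Prime)
    (Q : ℝ) (hQ1 : 1 < Q) (hQN : Q ≤ N)
    (hpos : 0 < ∑ p ∈ P.filter (fun p : ℕ => (p : ℝ) ≤ Q),
        Real.log p / ((A.image (· % p)).card : ℝ) - Real.log N) :
    (A.card : ℝ) ≤
      (∑ p ∈ P.filter (fun p : ℕ => (p : ℝ) ≤ Q), Real.log p - Real.log N) /
      (∑ p ∈ P.filter (fun p : ℕ => (p : ℝ) ≤ Q),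
        Real.log p / ((A.image (· % p)).card : ℝ) - Real.log N) := by
  classical
  set Pf := P.filter (fun p : ℕ => (p : ℝ) ≤ Q) with hPf
  set Z : ℝ := (A.card : ℝ) with hZ
  have hlogN : 0 ≤ Real.log N := Real.log_natCast_nonneg N
  have hAne : A.Nonempty := by
    by_contra h
    rw [Finset.not_nonempty_iff_eq_empty] at h
    simp only [h, Finset.image_empty, Finset.card_empty, Nat.cast_zero, div_zero,
      Finset.sum_const_zero] at hpos
    linarith
  have hZ1 : (1 : ℝ) ≤ Z := by
    rw [hZ]
    exact_mod_cast Nat.one_le_cast.mpr (Finset.card_pos.mpr hAne)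
  have hZ0 : (0 : ℝ) < Z := lt_of_lt_of_le one_pos hZ1
  set Sp : ℕ → Finset (ℕ × ℕ) :=
    fun p => (A ×ˢ A).filter (fun x : ℕ × ℕ => x.1 % p = x.2 % p) with hSp
  -- Cauchy-Schwarz : Z^2 ≤ |A_p| * |Sp p|
  have key : ∀ p : ℕ, Z^2 ≤ ((A.image (· % p)).card : ℝ) * ((Sp p).card : ℝ) := by
    intro p
    have hfib : Z = ∑ r ∈ A.image (· % p), ((A.filter (· % p = r)).card : ℝ) := by
      rw [hZ]
      rw [Finset.card_eq_sum_card_fiberwise (f := (· % p)) (t := A.image (· % p))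
        (fun x hx => Finset.mem_image_of_mem _ hx)]
      push_cast
      rfl
    have hc : ((Sp p).card : ℝ)
        = ∑ r ∈ A.image (· % p), (((A.filter (· % p = r)).card : ℝ))^2 := by
      rw [hSp]
      rw [gls_card_pairs A p]
      push_cast
      rfl
    rw [hfib, hc]
    exact sq_sum_le_card_mul_sum_sq
  have hap_pos : ∀ p : ℕ, 0 < ((A.image (· % p)).card : ℝ) := by
    intro p
    exact_mod_cast Finset.card_pos.mpr (hAne.image _)
  have hlogp : ∀ p ∈ Pf, 0 ≤ Real.log p := fun p _ => Real.log_natCast_nonneg p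
  have lower : Z^2 * (∑ p ∈ Pf, Real.log p / ((A.image (· % p)).card : ℝ))
      ≤ ∑ p ∈ Pf, Real.log p * ((Sp p).card : ℝ) := by
    rw [Finset.mul_sum]
    refine Finset.sum_le_sum fun p hp => ?_
    have h1 : Z^2 / ((A.image (· % p)).card : ℝ) ≤ ((Sp p).card : ℝ) :=
      (div_le_iff₀ (hap_pos p)).mpr (by rw [mul_comm]; exact key p)
    calc Z^2 * (Real.log p / ((A.image (· % p)).card : ℝ))
        = Real.log p * (Z^2 / ((A.image (· % p)).card : ℝ)) := by ring
      _ ≤ Real.log p * ((Sp p).card : ℝ) :=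
          mul_le_mul_of_nonneg_left h1 (hlogp p hp)
  -- upper bound: swap sums
  have upper : ∑ p ∈ Pf, Real.log p * ((Sp p).card : ℝ)
      ≤ Z * (∑ p ∈ Pf, Real.log p) + (Z^2 - Z) * Real.log N := by
    have swap : ∑ p ∈ Pf, Real.log p * ((Sp p).card : ℝ)
        = ∑ x ∈ A ×ˢ A, ∑ p ∈ Pf.filter (fun p => x.1 % p = x.2 % p), Real.log p := by
      calc ∑ p ∈ Pf, Real.log p * ((Sp p).card : ℝ)
          = ∑ p ∈ Pf, ∑ x ∈ A ×ˢ A,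
              (if x.1 % p = x.2 % p then Real.log p else 0) := by
            refine Finset.sum_congr rfl fun p _ => ?_
            rw [← Finset.sum_filter, Finset.sum_const, nsmul_eq_mul, mul_comm]
        _ = ∑ x ∈ A ×ˢ A, ∑ p ∈ Pf,
              (if x.1 % p = x.2 % p then Real.log p else 0) := Finset.sum_comm
        _ = ∑ x ∈ A ×ˢ A, ∑ p ∈ Pf.filter (fun p => x.1 % p = x.2 % p), Real.log p := by
            refine Finset.sum_congr rfl fun x _ => ?_
            exact (Finset.sum_filter _ _).symm
    rw [swap]
    rw [← Finset.diag_union_offDiag A, Finset.sum_union (Finset.disjoint_diag_offDiag A)]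
    have hdiag : ∑ x ∈ A.diag, ∑ p ∈ Pf.filter (fun p => x.1 % p = x.2 % p), Real.log p
        = Z * (∑ p ∈ Pf, Real.log p) := by
      have heq : ∀ x ∈ A.diag,
          ∑ p ∈ Pf.filter (fun p => x.1 % p = x.2 % p), Real.log p
            = ∑ p ∈ Pf, Real.log p := by
        intro x hx
        rw [Finset.mem_diag] at hx
        rw [hx.2]
        congr 1
        exact Finset.filter_true_of_mem (fun p _ => rfl)
      rw [Finset.sum_congr rfl heq, Finset.sum_const, Finset.diag_card, nsmul_eq_mul]
    have hoff : ∑ x ∈ A.offDiag, ∑ p ∈ Pf.filter (fun p => x.1 % p = x.2 % p), Real.log p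
        ≤ (Z^2 - Z) * Real.log N := by
      have hbound : ∀ x ∈ A.offDiag,
          ∑ p ∈ Pf.filter (fun p => x.1 % p = x.2 % p), Real.log p ≤ Real.log N := by
        intro x hx
        rw [Finset.mem_offDiag] at hx
        obtain ⟨ha, hb, hne⟩ := hx
        set s := Pf.filter (fun p => x.1 % p = x.2 % p) with hs
        set d : ℕ := ((x.1 : ℤ) - (x.2 : ℤ)).natAbs with hd
        have hd0 : 0 < d := by
          simp only [hd, Int.natAbs_pos, sub_ne_zero]
          exact_mod_cast hne
        have hsP : ∀ p ∈ s, p.Prime := by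
          intro p hp
          rw [hs, Finset.mem_filter, hPf, Finset.mem_filter] at hp
          exact hP p hp.1.1
        have hdvd : ∀ p ∈ s, p ∣ d := by
          intro p hp
          rw [hs, Finset.mem_filter] at hp
          have hmod : x.2 ≡ x.1 [MOD p] := hp.2.symm
          have : (p : ℤ) ∣ (x.1 : ℤ) - (x.2 : ℤ) := hmod.dvd
          have h2 := Int.natAbs_dvd_natAbs.mpr this
          simpa [hd] using h2
        have hprod : (∏ p ∈ s, p) ∣ d :=
          Finset.prod_primes_dvd d (fun p hp => (hsP p hp).prime) hdvd
        have hdN : d ≤ N := by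
          have h1 := (Finset.mem_Icc.mp (hA ha)).2
          have h2 := (Finset.mem_Icc.mp (hA hb)).1
          have h3 := (Finset.mem_Icc.mp (hA ha)).1
          have h4 := (Finset.mem_Icc.mp (hA hb)).2
          rw [hd]
          omega
        calc ∑ p ∈ s, Real.log p
            = Real.log (∏ p ∈ s, (p : ℝ)) := by
              rw [Real.log_prod]
              intro p hp
              exact_mod_cast (hsP p hp).pos.ne'
          _ ≤ Real.log N := by
              apply Real.log_le_log
              · refine Finset.prod_pos fun p hp => ?_
                exact_mod_cast (hsP p hp).pos
              · rw [← Nat.cast_prod]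
                exact_mod_cast (Nat.le_of_dvd hd0 hprod).trans hdN
      calc ∑ x ∈ A.offDiag, ∑ p ∈ Pf.filter (fun p => x.1 % p = x.2 % p), Real.log p
          ≤ ∑ _x ∈ A.offDiag, Real.log N := Finset.sum_le_sum hbound
        _ = (A.offDiag.card : ℝ) * Real.log N := by rw [Finset.sum_const, nsmul_eq_mul]
        _ = (Z^2 - Z) * Real.log N := by
            have hle : A.card ≤ A.card * A.card :=
              Nat.le_mul_of_pos_left _ (Finset.card_pos.mpr hAne)
            rw [Finset.offDiag_card, Nat.cast_sub hle]
            push_cast [hZ]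
            ring
    linarith
  set S1 : ℝ := ∑ p ∈ Pf, Real.log p / ((A.image (· % p)).card : ℝ) with hS1
  set T : ℝ := ∑ p ∈ Pf, Real.log p with hT
  have hmain : Z^2 * (S1 - Real.log N) ≤ Z * (T - Real.log N) := by nlinarith [lower, upper]
  have hden : 0 < S1 - Real.log N := hpos
  rw [le_div_iff₀ hden]
  nlinarith [hmain, hden, hZ0, hZ1]
end

section
/- Vinogradov's double character sum bound: Let p be prime, χ a nontrivial multiplicative character of F_p, and λ ∈ F_p^*. For any subsets A, B ⊆ F_p^*, |∑_{a∈A} ∑_{b∈B} χ(ab+λ)| ≤ √(p·|A|·|B|). -/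
open Finset

section Aux

variable {p : ℕ} [Fact p.Prime]

private lemma chi_conj (χ : MulChar (ZMod p) ℂ) (x : ZMod p) :
    (starRingEnd ℂ) (χ x) = χ x⁻¹ := by
  rcases eq_or_ne x 0 with rfl | hx
  · rw [inv_zero, MulChar.map_zero, map_zero]
  · have h1 : χ x * χ x⁻¹ = 1 := by
      rw [← map_mul, mul_inv_cancel₀ hx, map_one]
    have hpow : (χ x) ^ (p - 1) = 1 := by
      rw [← map_pow, ZMod.pow_card_sub_one_eq_one hx, map_one]
    have hnorm : ‖χ x‖ = 1 :=
      Complex.norm_eq_one_of_pow_eq_one hpow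
        (Nat.sub_ne_zero_of_lt (Fact.out : p.Prime).one_lt)
    rw [← Complex.inv_eq_conj hnorm]
    exact (eq_inv_of_mul_eq_one_left (by rw [mul_comm] at h1; exact h1)).symm

private lemma key_orth (χ : MulChar (ZMod p) ℂ) (hχ : χ ≠ 1) (lam : ZMod p)
    (hlam : lam ≠ 0) {b b' : ZMod p} (hb : b ≠ 0) (hb' : b' ≠ 0) :
    ∑ a : ZMod p, χ (a * b + lam) * (starRingEnd ℂ) (χ (a * b' + lam)) =
      (if b = b' then (p : ℂ) else 0) - χ (b * b'⁻¹) := by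
  have hrw : ∀ a : ZMod p, χ (a * b + lam) * (starRingEnd ℂ) (χ (a * b' + lam))
      = χ ((a * b + lam) * (a * b' + lam)⁻¹) := fun a => by
    rw [chi_conj, map_mul]
  rw [Finset.sum_congr rfl fun a _ => hrw a]
  have ha0 : ∀ a : ZMod p, a * b' + lam = 0 ↔ a = -lam * b'⁻¹ := by
    intro a
    rw [eq_mul_inv_iff_mul_eq₀ hb']
    constructor <;> intro h <;> linear_combination h
  by_cases h : b = b'
  · subst h
    simp only [if_pos rfl]
    have h2 : ∀ a : ZMod p, χ ((a * b + lam) * (a * b + lam)⁻¹)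
        = 1 - (if a = -lam * b⁻¹ then (1 : ℂ) else 0) := by
      intro a
      by_cases ha : a * b + lam = 0
      · rw [if_pos (((ha0 a).mp ha)), ha, inv_zero, mul_zero, MulChar.map_zero]
        ring
      · rw [if_neg (fun hh => ha ((ha0 a).mpr hh)), mul_inv_cancel₀ ha, map_one]
        ring
    rw [Finset.sum_congr rfl fun a _ => h2 a, Finset.sum_sub_distrib,
      Finset.sum_ite_eq' univ (-lam * b⁻¹) (fun _ => (1 : ℂ))]
    simp [ZMod.card, mul_inv_cancel₀ hb]
  · simp only [if_neg h]
    have hsum : ∑ t : ZMod p, χ t = 0 := MulChar.sum_eq_zero_of_ne_one hχ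
    have herase : ∑ t ∈ (univ : Finset (ZMod p)).erase (b * b'⁻¹), χ t
        = 0 - χ (b * b'⁻¹) := by
      rw [← Finset.add_sum_erase _ _ (mem_univ (b * b'⁻¹))] at hsum
      linear_combination hsum
    rw [← herase]
    set s := (univ : Finset (ZMod p)).erase (-lam * b'⁻¹) with hs
    set g := fun a : ZMod p => (a * b + lam) * (a * b' + lam)⁻¹ with hg
    have hmem : ∀ a ∈ s, a * b' + lam ≠ 0 := by
      intro a ha hz
      exact (Finset.ne_of_mem_erase ha) ((ha0 a).mp hz)
    -- drop the vanishing term at a₀ = -lam * b'⁻¹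
    have hz0 : g (-lam * b'⁻¹) = 0 := by
      have hd : -lam * b'⁻¹ * b' + lam = 0 := by
        rw [mul_assoc, inv_mul_cancel₀ hb', mul_one, neg_add_cancel]
      simp only [hg, hd, inv_zero, mul_zero]
    rw [show (∑ a : ZMod p, χ ((a * b + lam) * (a * b' + lam)⁻¹))
        = ∑ a : ZMod p, χ (g a) from rfl,
      ← Finset.add_sum_erase _ _ (mem_univ (-lam * b'⁻¹)), hz0,
      MulChar.map_zero, zero_add, ← hs]
    -- bijection argument
    have hinj : Set.InjOn g s := by
      intro a ha a' ha' heq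
      have d1 := hmem a ha
      have d2 := hmem a' ha'
      simp only [hg] at heq
      rw [← div_eq_mul_inv, ← div_eq_mul_inv, div_eq_div_iff d1 d2] at heq
      have h0 : lam * (b - b') * (a - a') = 0 := by linear_combination heq
      rcases mul_eq_zero.mp h0 with h1 | h1
      · rcases mul_eq_zero.mp h1 with h2 | h2
        · exact absurd h2 hlam
        · exact absurd (sub_eq_zero.mp h2) h
      · exact sub_eq_zero.mp h1
    have hsub : s.image g ⊆ (univ : Finset (ZMod p)).erase (b * b'⁻¹) := by
      intro t ht
      rcases Finset.mem_image.mp ht with ⟨a, ha, rfl⟩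
      refine Finset.mem_erase.mpr ⟨?_, mem_univ _⟩
      intro heq
      have d1 := hmem a ha
      simp only [hg] at heq
      rw [← div_eq_mul_inv, ← div_eq_mul_inv, div_eq_div_iff d1 hb'] at heq
      have h0 : lam * (b' - b) = 0 := by linear_combination heq
      rcases mul_eq_zero.mp h0 with h1 | h1
      · exact hlam h1
      · exact h (sub_eq_zero.mp h1).symm
    have hcard : ((univ : Finset (ZMod p)).erase (b * b'⁻¹)).card ≤ (s.image g).card := by
      rw [Finset.card_image_of_injOn hinj, hs,
        Finset.card_erase_of_mem (mem_univ _), Finset.card_erase_of_mem (mem_univ _)]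
    have himg : s.image g = (univ : Finset (ZMod p)).erase (b * b'⁻¹) :=
      Finset.eq_of_subset_of_card_le hsub hcard
    rw [← himg, Finset.sum_image (fun a ha a' ha' hx => hinj ha ha' hx)]

end Aux

/-- Vinogradov's double character sum bound: for a nontrivial multiplicative
character `χ` of `F_p`, `λ ∈ F_p^*`, and `A, B ⊆ F_p^*`,
`|∑_{a∈A} ∑_{b∈B} χ(ab+λ)| ≤ √(p·|A|·|B|)`. -/
theorem vinogradov_double_char_sum (p : ℕ) [Fact p.Prime]
    (χ : MulChar (ZMod p) ℂ) (hχ : χ ≠ 1) (lam : ZMod p) (hlam : lam ≠ 0)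
    (A B : Finset (ZMod p)) (hA : ∀ a ∈ A, a ≠ 0) (hB : ∀ b ∈ B, b ≠ 0) :
    ‖∑ a ∈ A, ∑ b ∈ B, χ (a * b + lam)‖ ≤
      Real.sqrt (p * A.card * B.card) := by
  set T : ZMod p → ℂ := fun a => ∑ b ∈ B, χ (a * b + lam) with hT
  -- Step 4: second moment bound
  have h4 : ∑ a : ZMod p, (‖T a‖) ^ 2 ≤ (p : ℝ) * B.card := by
    have hE : ∑ a : ZMod p, (T a * (starRingEnd ℂ) (T a))
        = (p : ℂ) * B.card - (∑ b ∈ B, χ b) * (starRingEnd ℂ) (∑ b ∈ B, χ b) := by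
      have expand : ∀ a : ZMod p, T a * (starRingEnd ℂ) (T a)
          = ∑ b ∈ B, ∑ b' ∈ B, χ (a * b + lam) * (starRingEnd ℂ) (χ (a * b' + lam)) := by
        intro a
        rw [hT, map_sum, Finset.sum_mul_sum]
      rw [Finset.sum_congr rfl fun a _ => expand a, Finset.sum_comm]
      have swap2 : ∀ b ∈ B, (∑ a : ZMod p, ∑ b' ∈ B,
            χ (a * b + lam) * (starRingEnd ℂ) (χ (a * b' + lam)))
          = ∑ b' ∈ B, ((if b = b' then (p : ℂ) else 0) - χ (b * b'⁻¹)) := by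
        intro b hb
        rw [Finset.sum_comm]
        exact Finset.sum_congr rfl fun b' hb' =>
          key_orth χ hχ lam hlam (hB b hb) (hB b' hb')
      rw [Finset.sum_congr rfl swap2]
      have hsplit : ∑ b ∈ B, ∑ b' ∈ B, ((if b = b' then (p : ℂ) else 0) - χ (b * b'⁻¹))
          = (∑ b ∈ B, ∑ b' ∈ B, (if b = b' then (p : ℂ) else 0))
            - ∑ b ∈ B, ∑ b' ∈ B, χ (b * b'⁻¹) := by
        rw [← Finset.sum_sub_distrib]
        exact Finset.sum_congr rfl fun b _ => by rw [Finset.sum_sub_distrib]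
      rw [hsplit]
      congr 1
      · rw [Finset.sum_congr rfl fun b hb =>
          Finset.sum_ite_eq B b (fun _ => (p : ℂ))]
        rw [Finset.sum_congr rfl fun b hb => if_pos hb, Finset.sum_const]
        simp [mul_comm]
      · rw [map_sum, Finset.sum_mul_sum]
        exact Finset.sum_congr rfl fun b _ => Finset.sum_congr rfl fun b' hb' => by
          rw [map_mul, chi_conj]
    have hre : ∑ a : ZMod p, (‖T a‖) ^ 2
        = (∑ a : ZMod p, (T a * (starRingEnd ℂ) (T a))).re := by
      rw [Complex.re_sum]
      exact Finset.sum_congr rfl fun a _ => by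
        rw [Complex.mul_conj]
        simp [Complex.sq_norm]
    rw [hre, hE]
    have hnn : 0 ≤ ((∑ b ∈ B, χ b) * (starRingEnd ℂ) (∑ b ∈ B, χ b)).re := by
      rw [Complex.mul_conj]
      simp [Complex.normSq_nonneg]
    have : ((p : ℂ) * B.card - (∑ b ∈ B, χ b) * (starRingEnd ℂ) (∑ b ∈ B, χ b)).re
        = (p : ℝ) * B.card - ((∑ b ∈ B, χ b) * (starRingEnd ℂ) (∑ b ∈ B, χ b)).re := by
      simp [Complex.sub_re, Complex.mul_re]
    rw [this]
    linarith
  -- Step 1-3: Cauchy–Schwarz and extension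
  have h1 : ‖∑ a ∈ A, T a‖ ≤ ∑ a ∈ A, ‖T a‖ :=
    norm_sum_le _ _
  have h2 : (∑ a ∈ A, ‖T a‖) ^ 2
      ≤ A.card * ∑ a ∈ A, (‖T a‖) ^ 2 :=
    sq_sum_le_card_mul_sum_sq
  have h3 : ∑ a ∈ A, (‖T a‖) ^ 2 ≤ ∑ a : ZMod p, (‖T a‖) ^ 2 :=
    Finset.sum_le_sum_of_subset_of_nonneg (Finset.subset_univ A)
      (fun a _ _ => by positivity)
  have habs : ‖∑ a ∈ A, T a‖ ^ 2 ≤ (p : ℝ) * A.card * B.card := by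
    calc ‖∑ a ∈ A, T a‖ ^ 2
        ≤ (∑ a ∈ A, ‖T a‖) ^ 2 := by
          apply pow_le_pow_left₀ (norm_nonneg _) h1
      _ ≤ A.card * ∑ a ∈ A, (‖T a‖) ^ 2 := h2
      _ ≤ A.card * ((p : ℝ) * B.card) := by
          apply mul_le_mul_of_nonneg_left (le_trans h3 h4) (Nat.cast_nonneg _)
      _ = (p : ℝ) * A.card * B.card := by ring
  exact Real.le_sqrt_of_sq_le habs
end

section
/- Let p_1, …, p_m be distinct primes and p a prime with p ≡ 1 (mod p_i) for each i. Let λ ∈ F_p^* and H_i = {x^{p_i} : x ∈ F_p}. If A ⊆ F_p^* satisfies ab+λ ∈ ⋃_{i=1}^m H_i for all distinct a, b ∈ A, then |A| ≤ (2^m·√p + 2)·∏_{i=1}^m (1 − 1/p_i)^{−1}. -/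
open Finset
open scoped Classical

section Aux
variable {p : ℕ} [Fact p.Prime]

noncomputable instance : Fintype (MulChar (ZMod p) ℂ) := Fintype.ofFinite _

private lemma ffupb_card_and_orth (d : ℕ) (hd : d ∣ p - 1) (hd0 : d ≠ 0) :
    ((univ.filter fun χ : MulChar (ZMod p) ℂ => χ ^ d = 1).card = d) ∧
    ∀ x : ZMod p, x ≠ 0 →
      (∑ χ ∈ univ.filter (fun χ : MulChar (ZMod p) ℂ => χ ^ d = 1), χ x)
        = if ∃ y : ZMod p, y ^ d = x then (d : ℂ) else 0 := by
  obtain ⟨g, hg⟩ := IsCyclic.exists_generator (α := (ZMod p)ˣ)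
  have hζ := Complex.isPrimitiveRoot_exp d hd0
  obtain ⟨χ₀, hχ₀⟩ := MulChar.exists_mulChar_orderOf (ZMod p) (by rwa [ZMod.card]) hζ
  have hevinj : Function.Injective fun χ : MulChar (ZMod p) ℂ => χ g.val :=
    fun χ₁ χ₂ h => (MulChar.eq_iff hg χ₁ χ₂).mpr h
  have hd0' : 0 < d := Nat.pos_of_ne_zero hd0
  -- card = d
  have hcard : (univ.filter fun χ : MulChar (ZMod p) ℂ => χ ^ d = 1).card = d := by
    refine le_antisymm ?_ ?_
    · refine le_trans (Finset.card_le_card_of_injOn (t := (Polynomial.nthRoots d (1 : ℂ)).toFinset)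
        (fun χ : MulChar (ZMod p) ℂ => χ g.val)
        (fun χ hχ => ?_) hevinj.injOn) ?_
      case refine_2 =>
        exact le_trans (Multiset.toFinset_card_le _) (by simpa using Polynomial.card_nthRoots d (1 : ℂ))
      · simp only [Finset.mem_coe, Multiset.mem_toFinset, Polynomial.mem_nthRoots hd0']
        rw [← MulChar.pow_apply_coe]
        rw [Finset.mem_coe, mem_filter] at hχ
        rw [hχ.2, MulChar.one_apply_coe]
    · have hmem : ∀ j, χ₀ ^ j ∈ univ.filter fun χ : MulChar (ZMod p) ℂ => χ ^ d = 1 := by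
        intro j
        simp only [mem_filter, mem_univ, true_and]
        rw [← pow_mul, mul_comm, pow_mul, ← hχ₀, pow_orderOf_eq_one, one_pow]
      have := Finset.card_le_card_of_injOn (fun j => χ₀ ^ j)
        (s := Finset.range d) (fun j _ => hmem j) ?_
      · simpa using this
      · intro j hj k hk h
        simp only [Finset.coe_range, Set.mem_Iio] at hj hk
        exact pow_injOn_Iio_orderOf (by simpa [hχ₀] using hj) (by simpa [hχ₀] using hk) h
  refine ⟨hcard, fun x hx => ?_⟩
  by_cases hpow : ∃ y : ZMod p, y ^ d = x
  · rw [if_pos hpow]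
    obtain ⟨y, rfl⟩ := hpow
    have hy : y ≠ 0 := by rintro rfl; exact hx (zero_pow hd0)
    rw [Finset.sum_congr rfl (fun χ hχ => ?_), Finset.sum_const, hcard, nsmul_eq_mul, mul_one]
    rw [mem_filter] at hχ
    rw [map_pow, ← MulChar.pow_apply' χ hd0, hχ.2, MulChar.one_apply (isUnit_iff_ne_zero.mpr hy)]
  · rw [if_neg hpow]
    -- χ₀ x ≠ 1
    have hx1 : χ₀ x ≠ 1 := by
      intro h1
      obtain ⟨k, hk⟩ := Subgroup.mem_zpowers_iff.mp (hg (Units.mk0 x hx))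
      have hval : χ₀ x = ((MulChar.equivToUnitHom χ₀ g : ℂˣ) ^ k : ℂˣ) := by
        rw [← map_zpow, hk]
        rw [MulChar.coe_equivToUnitHom]
        rfl
      have hord : orderOf (MulChar.equivToUnitHom χ₀ g) = d := by
        have hinj2 : Function.Injective
            (MonoidHom.mk' (fun χ : MulChar (ZMod p) ℂ => MulChar.equivToUnitHom χ g)
              (fun χ₁ χ₂ => by ext; simp [MulChar.coe_equivToUnitHom])) := by
          intro χ₁ χ₂ h
          apply hevinj
          simpa [MulChar.coe_equivToUnitHom] using congrArg Units.val h
        rw [← hχ₀]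
        exact orderOf_injective _ hinj2 χ₀
      have : ((MulChar.equivToUnitHom χ₀ g) ^ k : ℂˣ) = 1 := by
        apply Units.ext
        rw [Units.val_one, ← hval]
        exact h1
      have hdk : (d : ℤ) ∣ k := by
        rw [← hord]
        exact orderOf_dvd_iff_zpow_eq_one.mpr this
      obtain ⟨j, rfl⟩ := hdk
      apply hpow
      refine ⟨((g ^ j : (ZMod p)ˣ) : ZMod p), ?_⟩
      have : ((g ^ j) ^ (d : ℕ) : (ZMod p)ˣ) = Units.mk0 x hx := by
        rw [← hk, ← zpow_natCast (g ^ j), ← zpow_mul, mul_comm]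
      calc ((g ^ j : (ZMod p)ˣ) : ZMod p) ^ d = (((g ^ j) ^ (d : ℕ) : (ZMod p)ˣ) : ZMod p) := by
            push_cast; ring
        _ = x := by rw [this]; rfl
    -- sum vanishes
    have hχ₀mem : χ₀ ^ d = 1 := by rw [← hχ₀, pow_orderOf_eq_one]
    set s := ∑ χ ∈ univ.filter (fun χ : MulChar (ZMod p) ℂ => χ ^ d = 1), χ x with hs
    have hmul : χ₀ x * s = s := by
      rw [hs, Finset.mul_sum]
      refine Finset.sum_nbij' (i := fun χ => χ₀ * χ) (j := fun χ => χ₀⁻¹ * χ) ?_ ?_ ?_ ?_ ?_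
      · intro χ hχ; rw [mem_filter] at *; exact ⟨mem_univ _, by rw [mul_pow, hχ₀mem, hχ.2, one_mul]⟩
      · intro χ hχ; rw [mem_filter] at *
        refine ⟨mem_univ _, by rw [mul_pow, inv_pow, hχ₀mem, inv_one, hχ.2, one_mul]⟩
      · intro χ _; simp [← mul_assoc]
      · intro χ _; simp [← mul_assoc]
      · intro χ _; rw [MulChar.mul_apply]
    exact eq_zero_of_mul_eq_self_left hx1 hmul

private lemma ffupb_affine (χ : MulChar (ZMod p) ℂ) (hχ : χ ≠ 1) {c e : ZMod p}
    (hc : c ≠ 0) (he : e ≠ 0) :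
    ∑ t : ZMod p, χ (c * t + e) * χ⁻¹ t = -χ c := by
  classical
  rw [← Finset.sum_erase_add _ _ (Finset.mem_univ (0 : ZMod p))]
  rw [show χ⁻¹ (0 : ZMod p) = 0 from MulChar.map_zero _, mul_zero, add_zero]
  have key : ∑ t ∈ univ.erase (0 : ZMod p), χ (c * t + e) * χ⁻¹ t
      = ∑ u ∈ univ.erase c, χ u := by
    refine Finset.sum_nbij' (i := fun t => c + e * t⁻¹) (j := fun u => e * (u - c)⁻¹)
      ?_ ?_ ?_ ?_ ?_
    · intro t ht
      rw [Finset.mem_erase] at ht ⊢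
      refine ⟨?_, mem_univ _⟩
      intro h
      have : e * t⁻¹ = 0 := by linear_combination h
      rcases mul_eq_zero.mp this with h' | h'
      · exact he h'
      · exact ht.1 (by simpa using inv_eq_zero.mp h')
    · intro u hu
      rw [Finset.mem_erase] at hu ⊢
      refine ⟨?_, mem_univ _⟩
      intro h
      rcases mul_eq_zero.mp h with h' | h'
      · exact he h'
      · exact hu.1 (by rwa [inv_eq_zero, sub_eq_zero] at h')
    · intro t ht
      rw [Finset.mem_erase] at ht
      field_simp
      rw [add_sub_cancel_left, div_div_eq_mul_div, mul_div_cancel_left₀ t he]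
    · intro u hu
      rw [Finset.mem_erase] at hu
      have h1 : u - c ≠ 0 := sub_ne_zero.mpr hu.1
      field_simp
      ring
    · intro t ht
      rw [Finset.mem_erase] at ht
      rw [MulChar.inv_apply', ← map_mul]
      congr 1
      field_simp
      rw [add_div, mul_div_cancel_right₀ _ ht.1]
  rw [key, Finset.sum_erase_eq_sub (mem_univ c), MulChar.sum_eq_zero_of_ne_one hχ, zero_sub]

private lemma ffupb_inner_offdiag (χ : MulChar (ZMod p) ℂ) (hχ : χ ≠ 1) {lam a a' : ZMod p}
    (hlam : lam ≠ 0) (ha : a ≠ 0) (ha' : a' ≠ 0) (hne : a ≠ a') :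
    ∑ b : ZMod p, χ (a * b + lam) * χ⁻¹ (a' * b + lam) = -(χ a * χ⁻¹ a') := by
  have hc : a * a'⁻¹ ≠ 0 := mul_ne_zero ha (inv_ne_zero ha')
  have hc1 : a * a'⁻¹ ≠ 1 := by
    intro h
    exact hne (by field_simp at h; exact h)
  have he : lam - a * a'⁻¹ * lam ≠ 0 := by
    intro h
    apply hc1
    have : lam * (1 - a * a'⁻¹) = 0 := by linear_combination h
    rcases mul_eq_zero.mp this with h' | h'
    · exact absurd h' hlam
    · linear_combination -h'
  have key := ffupb_affine χ hχ hc he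
  let e0 : ZMod p ≃ ZMod p := (Equiv.mulLeft₀ a' ha').trans (Equiv.addRight lam)
  calc ∑ b : ZMod p, χ (a * b + lam) * χ⁻¹ (a' * b + lam)
      = ∑ b : ZMod p, χ (a * a'⁻¹ * (e0 b) + (lam - a * a'⁻¹ * lam)) * χ⁻¹ (e0 b) := by
        refine Finset.sum_congr rfl fun b _ => ?_
        have : e0 b = a' * b + lam := rfl
        rw [this]
        congr 2
        field_simp
        ring
    _ = ∑ t : ZMod p, χ (a * a'⁻¹ * t + (lam - a * a'⁻¹ * lam)) * χ⁻¹ t :=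
        Equiv.sum_comp e0 (fun t => χ (a * a'⁻¹ * t + (lam - a * a'⁻¹ * lam)) * χ⁻¹ t)
    _ = -χ (a * a'⁻¹) := key
    _ = -(χ a * χ⁻¹ a') := by rw [map_mul, MulChar.inv_apply']

private lemma ffupb_inner_diag (χ : MulChar (ZMod p) ℂ) {lam a : ZMod p} (ha : a ≠ 0) :
    ∑ b : ZMod p, χ (a * b + lam) * χ⁻¹ (a * b + lam) = (p : ℂ) - 1 := by
  classical
  let e0 : ZMod p ≃ ZMod p := (Equiv.mulLeft₀ a ha).trans (Equiv.addRight lam)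
  have : ∑ b : ZMod p, χ (a * b + lam) * χ⁻¹ (a * b + lam)
      = ∑ t : ZMod p, χ t * χ⁻¹ t := by
    rw [← Equiv.sum_comp e0 (fun t => χ t * χ⁻¹ t)]
    rfl
  rw [this]
  have h2 : ∀ t : ZMod p, χ t * χ⁻¹ t = if t = 0 then 0 else 1 := by
    intro t
    by_cases ht : t = 0
    · simp [ht, MulChar.map_zero]
    · rw [if_neg ht, ← MulChar.mul_apply, mul_inv_cancel,
        MulChar.one_apply (isUnit_iff_ne_zero.mpr ht)]
  rw [Finset.sum_congr rfl fun t _ => h2 t]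
  have h3 : (∑ t : ZMod p, if t = 0 then (0 : ℂ) else 1)
      = ∑ t : ZMod p, ((1 : ℂ) - if t = 0 then 1 else 0) := by
    refine Finset.sum_congr rfl fun t _ => by split <;> simp
  rw [h3, Finset.sum_sub_distrib, Finset.sum_const,
    Finset.sum_ite_eq' Finset.univ (0 : ZMod p) (fun _ => (1 : ℂ))]
  simp [Finset.card_univ, ZMod.card]


private lemma ffupb_vinogradov (χ : MulChar (ZMod p) ℂ) (hχ : χ ≠ 1) {lam : ZMod p}
    (hlam : lam ≠ 0) {A : Finset (ZMod p)} (hA0 : ∀ a ∈ A, a ≠ 0) :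
    ‖∑ a ∈ A, ∑ b ∈ A, χ (a * b + lam)‖ ≤ Real.sqrt p * A.card := by
  classical
  set n := A.card with hn
  set F : ZMod p → ℂ := fun b => ∑ a ∈ A, χ (a * b + lam) with hF
  -- step 1: second moment over all of ZMod p
  have conjF : ∀ b, (starRingEnd ℂ) (F b) = ∑ a ∈ A, χ⁻¹ (a * b + lam) := by
    intro b
    rw [hF, map_sum]
    exact Finset.sum_congr rfl fun a _ => MulChar.star_apply' χ _
  have key : (↑(∑ b : ZMod p, Complex.normSq (F b)) : ℂ)
      = n * p - Complex.normSq (∑ a ∈ A, χ a) := by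
    push_cast
    rw [← Complex.mul_conj (∑ a ∈ A, χ a)]
    calc ∑ b : ZMod p, (Complex.normSq (F b) : ℂ)
        = ∑ b : ZMod p, F b * (starRingEnd ℂ) (F b) := by
          exact Finset.sum_congr rfl fun b _ => (Complex.mul_conj (F b)).symm
      _ = ∑ b : ZMod p, ∑ a ∈ A, ∑ a' ∈ A, χ (a * b + lam) * χ⁻¹ (a' * b + lam) := by
          refine Finset.sum_congr rfl fun b _ => ?_
          rw [conjF, hF, Finset.sum_mul_sum]
      _ = ∑ a ∈ A, ∑ a' ∈ A, ∑ b : ZMod p, χ (a * b + lam) * χ⁻¹ (a' * b + lam) := by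
          rw [Finset.sum_comm]
          exact Finset.sum_congr rfl fun a _ => Finset.sum_comm
      _ = ∑ a ∈ A, ∑ a' ∈ A,
            (-(χ a * χ⁻¹ a') + if a = a' then (p : ℂ) else 0) := by
          refine Finset.sum_congr rfl fun a ha => Finset.sum_congr rfl fun a' ha' => ?_
          by_cases h : a = a'
          · subst h
            rw [ffupb_inner_diag χ (hA0 a ha), if_pos rfl]
            have : χ a * χ⁻¹ a = 1 := by
              rw [← MulChar.mul_apply, mul_inv_cancel,
                MulChar.one_apply (isUnit_iff_ne_zero.mpr (hA0 a ha))]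
            rw [this]
            ring
          · rw [ffupb_inner_offdiag χ hχ hlam (hA0 a ha) (hA0 a' ha') h, if_neg h]
            ring
      _ = ↑n * ↑p - (∑ a ∈ A, χ a) * (starRingEnd ℂ) (∑ a ∈ A, χ a) := by
          rw [Finset.sum_congr rfl fun a _ => Finset.sum_add_distrib]
          rw [Finset.sum_add_distrib]
          have h1 : ∑ a ∈ A, ∑ a' ∈ A, (if a = a' then (p : ℂ) else 0) = n * p := by
            rw [Finset.sum_congr rfl fun a ha =>
              Finset.sum_ite_eq A a (fun _ => (p : ℂ)) |>.trans (if_pos ha)]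
            rw [Finset.sum_const, hn, nsmul_eq_mul]
          have h2 : ∑ a ∈ A, ∑ a' ∈ A, -(χ a * χ⁻¹ a')
              = -((∑ a ∈ A, χ a) * (starRingEnd ℂ) (∑ a ∈ A, χ a)) := by
            have hstar : (starRingEnd ℂ) (∑ a ∈ A, χ a) = ∑ a ∈ A, χ⁻¹ a := by
              rw [map_sum]
              exact Finset.sum_congr rfl fun a _ => MulChar.star_apply' χ a
            rw [hstar, Finset.sum_mul_sum, ← Finset.sum_neg_distrib]
            refine Finset.sum_congr rfl fun a _ => ?_
            rw [← Finset.sum_neg_distrib]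
          rw [h1, h2]
          ring
  have keyR : ∑ b : ZMod p, Complex.normSq (F b) ≤ n * p := by
    have := congrArg Complex.re key
    simp only [Complex.ofReal_re] at this
    rw [this]
    have : (↑n * ↑p - Complex.normSq (∑ a ∈ A, χ a) : ℂ).re
        = n * p - Complex.normSq (∑ a ∈ A, χ a) := by
      simp
    rw [this]
    have := Complex.normSq_nonneg (∑ a ∈ A, χ a)
    linarith
  -- step 2: Cauchy-Schwarz
  have hnorm : ‖∑ b ∈ A, F b‖ ≤ ∑ b ∈ A, ‖F b‖ := norm_sum_le _ _
  have hcs : (∑ b ∈ A, ‖F b‖) ^ 2 ≤ n * ∑ b ∈ A, ‖F b‖ ^ 2 := by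
    have := Finset.sum_mul_sq_le_sq_mul_sq A (fun _ => (1 : ℝ)) (fun b => ‖F b‖)
    simpa [hn] using this
  have hext : ∑ b ∈ A, ‖F b‖ ^ 2 ≤ ∑ b : ZMod p, ‖F b‖ ^ 2 :=
    Finset.sum_le_sum_of_subset_of_nonneg (Finset.subset_univ A)
      (fun b _ _ => sq_nonneg _)
  have hid : ∀ b, ‖F b‖ ^ 2 = Complex.normSq (F b) := fun b => by
    rw [← Complex.sq_norm]
  have h2 : (∑ b ∈ A, ‖F b‖) ^ 2 ≤ (n : ℝ) * ((n : ℝ) * (p : ℝ)) := by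
    refine le_trans hcs ?_
    refine mul_le_mul_of_nonneg_left ?_ (by positivity)
    refine le_trans hext ?_
    rw [Finset.sum_congr rfl fun b _ => hid b]
    exact keyR
  have habs : ‖∑ b ∈ A, F b‖ ^ 2 ≤ (n : ℝ) ^ 2 * p := by
    calc ‖∑ b ∈ A, F b‖ ^ 2 ≤ (∑ b ∈ A, ‖F b‖) ^ 2 :=
          pow_le_pow_left₀ (norm_nonneg _) hnorm 2
      _ ≤ (n : ℝ) * ((n : ℝ) * (p : ℝ)) := h2
      _ = (n : ℝ) ^ 2 * p := by ring
  have final : ‖∑ b ∈ A, F b‖ ≤ Real.sqrt p * n := by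
    have h0 : (0 : ℝ) ≤ ‖∑ b ∈ A, F b‖ := norm_nonneg _
    have hs := Real.sqrt_le_sqrt habs
    rw [Real.sqrt_sq h0, Real.sqrt_mul (sq_nonneg _), Real.sqrt_sq (Nat.cast_nonneg n)] at hs
    exact hs.trans_eq (mul_comm _ _)
  calc ‖∑ a ∈ A, ∑ b ∈ A, χ (a * b + lam)‖
      = ‖∑ b ∈ A, F b‖ := by rw [hF, Finset.sum_comm]
    _ ≤ Real.sqrt p * n := final

private lemma ffupb_coprime_pow {x : ZMod p} (hx : x ≠ 0) {d₁ d₂ : ℕ}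
    (hcop : Nat.Coprime d₁ d₂) (h₁ : ∃ y : ZMod p, y ^ d₁ = x) (h₂ : ∃ y : ZMod p, y ^ d₂ = x) :
    ∃ y : ZMod p, y ^ (d₁ * d₂) = x := by
  rcases Nat.eq_zero_or_pos d₁ with h | hd₁
  · subst h; simpa using h₁
  rcases Nat.eq_zero_or_pos d₂ with h | hd₂
  · subst h; simpa [mul_comm] using h₂
  obtain ⟨y₁, hy₁⟩ := h₁
  obtain ⟨y₂, hy₂⟩ := h₂
  have hy₁0 : y₁ ≠ 0 := by rintro rfl; exact hx (by rw [← hy₁, zero_pow hd₁.ne'])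
  have hy₂0 : y₂ ≠ 0 := by rintro rfl; exact hx (by rw [← hy₂, zero_pow hd₂.ne'])
  -- Bezout
  obtain ⟨u, v, huv⟩ : IsCoprime (d₁ : ℤ) (d₂ : ℤ) := by
    rw [Int.isCoprime_iff_gcd_eq_one]
    exact_mod_cast hcop
  set xu : (ZMod p)ˣ := Units.mk0 x hx
  set u₁ : (ZMod p)ˣ := Units.mk0 y₁ hy₁0
  set u₂ : (ZMod p)ˣ := Units.mk0 y₂ hy₂0
  have hu₁ : u₁ ^ d₁ = xu := by ext; push_cast; exact hy₁
  have hu₂ : u₂ ^ d₂ = xu := by ext; push_cast; exact hy₂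
  set w : (ZMod p)ˣ := u₂ ^ u * u₁ ^ v
  have hw : w ^ (d₁ * d₂) = xu := by
    have : w ^ ((d₁ : ℤ) * d₂) = xu := by
      have e2 : u₂ ^ (d₂ : ℤ) = xu := by rw [zpow_natCast, hu₂]
      have e1 : u₁ ^ (d₁ : ℤ) = xu := by rw [zpow_natCast, hu₁]
      calc w ^ ((d₁ : ℤ) * d₂)
          = (u₂ ^ u) ^ ((d₁ : ℤ) * d₂) * (u₁ ^ v) ^ ((d₁ : ℤ) * d₂) := by
            rw [mul_zpow]
        _ = u₂ ^ (u * ((d₁ : ℤ) * d₂)) * u₁ ^ (v * ((d₁ : ℤ) * d₂)) := by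
            rw [← zpow_mul, ← zpow_mul]
        _ = (u₂ ^ (d₂ : ℤ)) ^ (u * d₁) * (u₁ ^ (d₁ : ℤ)) ^ (v * d₂) := by
            rw [show u * ((d₁ : ℤ) * d₂) = (d₂ : ℤ) * (u * d₁) from by ring,
              show v * ((d₁ : ℤ) * d₂) = (d₁ : ℤ) * (v * d₂) from by ring,
              zpow_mul u₂ (d₂ : ℤ) (u * (d₁ : ℤ)), zpow_mul u₁ (d₁ : ℤ) (v * (d₂ : ℤ))]
        _ = xu ^ (u * d₁ + v * d₂) := by rw [e2, e1, ← zpow_add]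
        _ = xu := by rw [show u * (d₁ : ℤ) + v * (d₂ : ℤ) = 1 from huv, zpow_one]
    rw [← zpow_natCast w (d₁ * d₂)]
    push_cast
    exact this
  refine ⟨(w : ZMod p), ?_⟩
  calc ((w : (ZMod p)ˣ) : ZMod p) ^ (d₁ * d₂) = ((w ^ (d₁ * d₂) : (ZMod p)ˣ) : ZMod p) := by
        push_cast; ring
    _ = x := by rw [hw]; rfl

private lemma ffupb_inter {m : ℕ} (ps : Fin m → ℕ) (hps : ∀ i, (ps i).Prime)
    (hinj : Function.Injective ps) {x : ZMod p} (hx : x ≠ 0) (S : Finset (Fin m)) :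
    (∀ i ∈ S, ∃ y : ZMod p, y ^ ps i = x) ↔ ∃ y : ZMod p, y ^ (∏ i ∈ S, ps i) = x := by
  induction S using Finset.induction_on with
  | empty => simpa using ⟨x, pow_one x⟩
  | insert i S hiS ih =>
    constructor
    · intro h
      rw [Finset.prod_insert hiS]
      have hcop : Nat.Coprime (ps i) (∏ j ∈ S, ps j) := by
        refine Nat.Coprime.prod_right fun j hj => ?_
        exact (Nat.coprime_primes (hps i) (hps j)).mpr
          (fun hij => hiS (by rwa [hinj hij]))
      refine ffupb_coprime_pow hx hcop (h i (Finset.mem_insert_self i S)) ?_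
      exact ih.mp fun j hj => h j (Finset.mem_insert_of_mem hj)
    · rintro ⟨y, hy⟩ j hj
      rw [Finset.prod_insert hiS] at hy
      rcases Finset.mem_insert.mp hj with rfl | hj'
      · exact ⟨y ^ (∏ k ∈ S, ps k), by rw [← pow_mul, mul_comm, hy]⟩
      · refine ⟨y ^ (ps i * ∏ k ∈ S.erase j, ps k), ?_⟩
        rw [← pow_mul]
        rw [show ps i * (∏ k ∈ S.erase j, ps k) * ps j = ps i * ∏ k ∈ S, ps k by
          rw [mul_assoc, Finset.prod_erase_mul S _ hj']]
        exact hy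

end Aux

/-- Finite field analogue of Diophantine tuples with property `D_{≤d}(n)`:
if `p ≡ 1 (mod p_i)` for distinct primes `p_1, …, p_m`, `λ ∈ F_p^*`, and
`A ⊆ F_p^*` is such that `ab + λ` is a `p_i`-th power for some `i`, for all
distinct `a, b ∈ A`, then `|A| ≤ (2^m·√p + 2)·∏_{i=1}^m (1 − 1/p_i)^{−1}`. -/
theorem finite_field_union_powers_bound (m : ℕ) (ps : Fin m → ℕ)
    (hps : ∀ i, (ps i).Prime) (hinj : Function.Injective ps)
    (p : ℕ) [Fact p.Prime] (hpd : ∀ i, p % ps i = 1 % ps i)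
    (lam : ZMod p) (hlam : lam ≠ 0)
    (A : Finset (ZMod p)) (hA0 : ∀ a ∈ A, a ≠ 0)
    (hpow : ∀ a ∈ A, ∀ b ∈ A, a ≠ b →
      ∃ i : Fin m, ∃ x : ZMod p, a * b + lam = x ^ ps i) :
    (A.card : ℝ) ≤ (2 ^ m * Real.sqrt p + 2) * ∏ i : Fin m, (1 - 1 / (ps i : ℝ))⁻¹ := by
  classical
  have hp2 : 2 ≤ p := (Fact.out : p.Prime).two_le
  -- the product of the correction factors
  set P : ℝ := ∏ i : Fin m, (1 - (ps i : ℝ)⁻¹) with hP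
  have hPpos : 0 < P := by
    refine Finset.prod_pos fun i _ => ?_
    have h2 : (2 : ℝ) ≤ (ps i : ℝ) := by exact_mod_cast (hps i).two_le
    have : (ps i : ℝ)⁻¹ ≤ 2⁻¹ := by
      apply inv_anti₀ <;> norm_num [h2]
    linarith
  have hPle1 : P ≤ 1 := by
    refine Finset.prod_le_one (fun i _ => ?_) (fun i _ => ?_)
    · have h2 : (2 : ℝ) ≤ (ps i : ℝ) := by exact_mod_cast (hps i).two_le
      have : (ps i : ℝ)⁻¹ ≤ 2⁻¹ := by apply inv_anti₀ <;> norm_num [h2]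
      linarith
    · have : (0 : ℝ) ≤ (ps i : ℝ)⁻¹ := by positivity
      linarith
  have hProd : ∏ i : Fin m, (1 - 1 / (ps i : ℝ))⁻¹ = P⁻¹ := by
    rw [hP, ← Finset.prod_inv_distrib]
    exact Finset.prod_congr rfl fun i _ => by rw [one_div]
  rw [hProd]
  have hsqrt : (0 : ℝ) ≤ Real.sqrt p := Real.sqrt_nonneg _
  -- trivial case m = 0
  rcases Nat.eq_zero_or_pos m with hm0 | hm
  · have hA1 : A.card ≤ 1 := by
      refine Finset.card_le_one.mpr fun a ha b hb => ?_
      by_contra hne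
      obtain ⟨i, -⟩ := hpow a ha b hb hne
      exact (hm0 ▸ i).elim0
    have hA1' : (A.card : ℝ) ≤ 1 := by exact_mod_cast hA1
    subst hm0
    have hP1 : P = 1 := by rw [hP]; simp
    rw [hP1]
    norm_num
    linarith
  -- main case
  set n := A.card with hn
  rcases Nat.eq_zero_or_pos n with hn0 | hn1
  · rw [hn0]
    push_cast
    positivity
  -- divisibility facts
  have hdvd : ∀ i, ps i ∣ p - 1 := fun i =>
    (Nat.modEq_iff_dvd' (by omega)).mp (hpd i).symm
  set D : Finset (Fin m) → ℕ := fun S => ∏ i ∈ S, ps i with hD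
  have hD0 : ∀ S, D S ≠ 0 := fun S =>
    (Finset.prod_pos fun i _ => (hps i).pos).ne'
  have hDdvd : ∀ S, D S ∣ p - 1 := by
    intro S
    have himg : ∏ q ∈ S.image ps, q = D S :=
      Finset.prod_image (fun i _ j _ h => hinj h)
    rw [← himg]
    refine Finset.prod_primes_dvd _ (fun q hq => ?_) (fun q hq => ?_)
    · obtain ⟨i, _, rfl⟩ := Finset.mem_image.mp hq
      exact (hps i).prime
    · obtain ⟨i, _, rfl⟩ := Finset.mem_image.mp hq
      exact hdvd i
  set Sd : ℕ → Finset (MulChar (ZMod p) ℂ) :=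
    fun d => univ.filter fun χ => χ ^ d = 1 with hSd
  have horth := fun S => ffupb_card_and_orth (p := p) (D S) (hDdvd S) (hD0 S)
  -- pointwise inclusion-exclusion identity
  have claimC : ∀ x : ZMod p,
      (if ∃ i, ∃ y : ZMod p, y ^ ps i = x then (1 : ℂ) else 0)
        = 1 - ∑ S ∈ (univ : Finset (Fin m)).powerset,
            (-1) ^ S.card * ((D S : ℂ))⁻¹ * ∑ χ ∈ Sd (D S), χ x := by
    intro x
    by_cases hx : x = 0
    · have hz : ∀ d, ∑ χ ∈ Sd d, χ x = 0 :=
        fun d => Finset.sum_eq_zero fun χ _ => by rw [hx]; exact MulChar.map_zero χ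
      rw [Finset.sum_congr rfl fun S _ => by rw [hz (D S), mul_zero]]
      rw [Finset.sum_const_zero, sub_zero,
        if_pos ⟨⟨0, hm⟩, 0, by rw [hx, zero_pow (hps ⟨0, hm⟩).pos.ne']⟩]
    · have hterm : ∀ S ∈ (univ : Finset (Fin m)).powerset,
          (-1) ^ S.card * ((D S : ℂ))⁻¹ * ∑ χ ∈ Sd (D S), χ x
            = ∏ i ∈ S, (-(if ∃ y : ZMod p, y ^ ps i = x then (1 : ℂ) else 0)) := by
        intro S _
        rw [(horth S).2 x hx]
        by_cases hxS : ∃ y : ZMod p, y ^ D S = x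
        · rw [if_pos hxS]
          have hall : ∀ i ∈ S, ∃ y : ZMod p, y ^ ps i = x :=
            (ffupb_inter ps hps hinj hx S).mpr hxS
          rw [Finset.prod_congr rfl fun i hi => by rw [if_pos (hall i hi)]]
          rw [Finset.prod_const]
          have hDne : ((D S : ℂ)) ≠ 0 := Nat.cast_ne_zero.mpr (hD0 S)
          field_simp
        · rw [if_neg hxS, mul_zero]
          have : ¬ ∀ i ∈ S, ∃ y : ZMod p, y ^ ps i = x :=
            fun h => hxS ((ffupb_inter ps hps hinj hx S).mp h)
          push_neg at this
          obtain ⟨i, hi, hni⟩ := this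
          exact (Finset.prod_eq_zero hi (by rw [if_neg (not_exists.mpr hni), neg_zero])).symm
      rw [Finset.sum_congr rfl hterm]
      have expand : ∏ i : Fin m, ((-(if ∃ y : ZMod p, y ^ ps i = x then (1 : ℂ) else 0)) + 1)
          = ∑ t ∈ (univ : Finset (Fin m)).powerset,
              ∏ i ∈ t, (-(if ∃ y : ZMod p, y ^ ps i = x then (1 : ℂ) else 0)) := by
        rw [Finset.prod_add]
        exact Finset.sum_congr rfl fun t _ => by rw [Finset.prod_const_one, mul_one]
      rw [← expand]
      by_cases hU : ∃ i, ∃ y : ZMod p, y ^ ps i = x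
      · rw [if_pos hU]
        obtain ⟨i, hi⟩ := hU
        rw [Finset.prod_eq_zero (mem_univ i) (by rw [if_pos hi]; ring)]
        norm_num
      · rw [if_neg hU]
        push_neg at hU
        rw [Finset.prod_congr rfl fun i _ =>
          by rw [if_neg (not_exists.mpr (hU i)), neg_zero, zero_add]]
        rw [Finset.prod_const_one]
        norm_num
  -- counting quantities
  set Z : ℕ := ((A ×ˢ A).filter fun q => q.1 * q.2 + lam = 0).card with hZ
  set T : ℕ := ((A ×ˢ A).filter fun q =>
    ∃ i, ∃ y : ZMod p, y ^ ps i = q.1 * q.2 + lam).card with hT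
  set V : MulChar (ZMod p) ℂ → ℂ := fun χ => ∑ q ∈ A ×ˢ A, χ (q.1 * q.2 + lam) with hV
  set Esum : ℂ := ∑ S ∈ (univ : Finset (Fin m)).powerset,
    (-1) ^ S.card * ((D S : ℂ))⁻¹ * ∑ χ ∈ (Sd (D S)).erase 1, V χ with hEsum
  -- the main complex identity
  have hPc : ∑ S ∈ (univ : Finset (Fin m)).powerset, (-1) ^ S.card * ((D S : ℂ))⁻¹ = (P : ℂ) := by
    have h1 : ∀ t : Finset (Fin m), ∏ i ∈ t, (-(ps i : ℂ)⁻¹) = (-1) ^ t.card * ((D t : ℂ))⁻¹ := by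
      intro t
      calc ∏ i ∈ t, (-(ps i : ℂ)⁻¹) = ∏ i ∈ t, ((-1) * (ps i : ℂ)⁻¹) :=
            Finset.prod_congr rfl fun i _ => by ring
        _ = ((-1) ^ t.card) * ∏ i ∈ t, (ps i : ℂ)⁻¹ := by
            rw [Finset.prod_mul_distrib, Finset.prod_const]
        _ = (-1) ^ t.card * ((D t : ℂ))⁻¹ := by
            congr 1
            rw [show ((D t : ℕ) : ℂ) = ∏ i ∈ t, (ps i : ℂ) from by rw [hD]; push_cast; rfl,
              Finset.prod_inv_distrib]
    calc ∑ S ∈ (univ : Finset (Fin m)).powerset, (-1) ^ S.card * ((D S : ℂ))⁻¹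
        = ∑ S ∈ (univ : Finset (Fin m)).powerset, ∏ i ∈ S, (-(ps i : ℂ)⁻¹) :=
          Finset.sum_congr rfl fun S _ => (h1 S).symm
      _ = ∑ S ∈ (univ : Finset (Fin m)).powerset,
            (∏ i ∈ S, (-(ps i : ℂ)⁻¹)) * ∏ i ∈ univ \ S, (1 : ℂ) :=
          Finset.sum_congr rfl fun S _ => by rw [Finset.prod_const_one, mul_one]
      _ = ∏ i : Fin m, ((-(ps i : ℂ)⁻¹) + 1) := (Finset.prod_add _ _ _).symm
      _ = (P : ℂ) := by
          rw [hP]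
          push_cast
          exact Finset.prod_congr rfl fun i _ => by ring
  have hmain : (T : ℂ) = (n : ℂ) ^ 2 - (P : ℂ) * ((n : ℂ) ^ 2 - (Z : ℂ)) - Esum := by
    have hone : ∀ d, (1 : MulChar (ZMod p) ℂ) ∈ Sd d := fun d => by
      rw [hSd]
      exact Finset.mem_filter.mpr ⟨mem_univ _, one_pow d⟩
    have hV1 : V 1 = (n : ℂ) ^ 2 - Z := by
      show (∑ q ∈ A ×ˢ A, (1 : MulChar (ZMod p) ℂ) (q.1 * q.2 + lam)) = (n : ℂ) ^ 2 - Z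
      have hpt : ∀ q ∈ A ×ˢ A, (1 : MulChar (ZMod p) ℂ) (q.1 * q.2 + lam)
          = 1 - (if q.1 * q.2 + lam = 0 then (1 : ℂ) else 0) := by
        intro q _
        by_cases h : q.1 * q.2 + lam = 0
        · rw [if_pos h, h, MulChar.map_zero, sub_self]
        · rw [if_neg h, MulChar.one_apply (isUnit_iff_ne_zero.mpr h), sub_zero]
      rw [Finset.sum_congr rfl hpt, Finset.sum_sub_distrib, Finset.sum_const,
        Finset.card_product, Finset.sum_boole, hZ]
      push_cast
      ring
    have hsplit : ∀ S : Finset (Fin m), ∑ χ ∈ Sd (D S), V χ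
        = ((n : ℂ) ^ 2 - Z) + ∑ χ ∈ (Sd (D S)).erase 1, V χ := by
      intro S
      rw [← hV1, Finset.add_sum_erase _ V (hone (D S))]
    have hTsum : (T : ℂ) = ∑ q ∈ A ×ˢ A,
        (if ∃ i, ∃ y : ZMod p, y ^ ps i = q.1 * q.2 + lam then (1 : ℂ) else 0) := by
      rw [hT]
      exact (Finset.sum_boole _ _).symm
    have hswap : ∑ q ∈ A ×ˢ A, ∑ S ∈ (univ : Finset (Fin m)).powerset,
          (-1) ^ S.card * ((D S : ℂ))⁻¹ * ∑ χ ∈ Sd (D S), χ (q.1 * q.2 + lam)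
        = ∑ S ∈ (univ : Finset (Fin m)).powerset,
            (-1) ^ S.card * ((D S : ℂ))⁻¹ * ∑ χ ∈ Sd (D S), V χ := by
      rw [Finset.sum_comm]
      refine Finset.sum_congr rfl fun S _ => ?_
      rw [← Finset.mul_sum]
      congr 1
      rw [Finset.sum_comm]
    calc (T : ℂ)
        = ∑ q ∈ A ×ˢ A,
            (1 - ∑ S ∈ (univ : Finset (Fin m)).powerset,
              (-1) ^ S.card * ((D S : ℂ))⁻¹ * ∑ χ ∈ Sd (D S), χ (q.1 * q.2 + lam)) := by
          rw [hTsum]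
          exact Finset.sum_congr rfl fun q _ => claimC (q.1 * q.2 + lam)
      _ = (n : ℂ) ^ 2 - ∑ S ∈ (univ : Finset (Fin m)).powerset,
            (-1) ^ S.card * ((D S : ℂ))⁻¹ * ∑ χ ∈ Sd (D S), V χ := by
          rw [Finset.sum_sub_distrib, Finset.sum_const, Finset.card_product, hswap]
          rw [nsmul_eq_mul]
          push_cast
          ring
      _ = (n : ℂ) ^ 2 - ∑ S ∈ (univ : Finset (Fin m)).powerset,
            ((-1) ^ S.card * ((D S : ℂ))⁻¹ * ((n : ℂ) ^ 2 - Z)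
              + (-1) ^ S.card * ((D S : ℂ))⁻¹ * ∑ χ ∈ (Sd (D S)).erase 1, V χ) := by
          congr 1
          refine Finset.sum_congr rfl fun S _ => ?_
          rw [hsplit S, mul_add]
      _ = (n : ℂ) ^ 2 - (P : ℂ) * ((n : ℂ) ^ 2 - (Z : ℂ)) - Esum := by
          rw [Finset.sum_add_distrib, ← Finset.sum_mul, hPc, hEsum]
          ring
  -- bounds
  have hTlow : (n : ℝ) ^ 2 - n ≤ T := by
    have hsub : A.offDiag ⊆ (A ×ˢ A).filter
        (fun q => ∃ i, ∃ y : ZMod p, y ^ ps i = q.1 * q.2 + lam) := by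
      intro q hq
      rw [Finset.mem_offDiag] at hq
      obtain ⟨ha, hb, hne⟩ := hq
      rw [Finset.mem_filter, Finset.mem_product]
      obtain ⟨i, x, hx⟩ := hpow q.1 ha q.2 hb hne
      exact ⟨⟨ha, hb⟩, i, x, hx.symm⟩
    have hcard := Finset.card_le_card hsub
    rw [Finset.offDiag_card] at hcard
    rw [← hn, ← hT] at hcard
    have hc2 : ((n * n - n : ℕ) : ℝ) ≤ (T : ℝ) := by exact_mod_cast hcard
    rw [Nat.cast_sub (Nat.le_mul_of_pos_left n hn1)] at hc2
    push_cast at hc2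
    nlinarith [hc2]
  have hZn : (Z : ℝ) ≤ n := by
    have hinj2 : Set.InjOn (fun q : ZMod p × ZMod p => q.1)
        ((A ×ˢ A).filter fun q => q.1 * q.2 + lam = 0) := by
      intro q hq q' hq' h
      simp only [Finset.coe_filter, Set.mem_setOf_eq, Finset.mem_product] at hq hq'
      obtain ⟨⟨ha, hb⟩, heq⟩ := hq
      obtain ⟨⟨ha', hb'⟩, heq'⟩ := hq'
      simp only at h
      have ha0 : q.1 ≠ 0 := hA0 _ ha
      have h2 : q.1 * q.2 = q.1 * q'.2 := by
        rw [eq_neg_of_add_eq_zero_left heq]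
        rw [h, eq_neg_of_add_eq_zero_left heq']
      exact Prod.ext h (mul_left_cancel₀ ha0 h2)
    have := Finset.card_le_card_of_injOn (fun q : ZMod p × ZMod p => q.1)
      (fun q hq => (Finset.mem_product.mp (Finset.mem_filter.mp hq).1).1) hinj2
    rw [← hZ, ← hn] at this
    exact_mod_cast this
  have hEbound : ‖Esum‖ ≤ 2 ^ m * (Real.sqrt p * n) := by
    rw [hEsum]
    refine le_trans (norm_sum_le _ _) ?_
    have hterm : ∀ S ∈ (univ : Finset (Fin m)).powerset,
        ‖(-1) ^ S.card * ((D S : ℂ))⁻¹ * ∑ χ ∈ (Sd (D S)).erase 1, V χ‖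
          ≤ Real.sqrt p * n := by
      intro S _
      rw [norm_mul, norm_mul, norm_pow, norm_neg, norm_one, one_pow, one_mul,
        norm_inv, Complex.norm_natCast]
      have hVb : ∀ χ ∈ (Sd (D S)).erase 1, ‖V χ‖ ≤ Real.sqrt p * n := by
        intro χ hχ
        have hχ1 : χ ≠ 1 := (Finset.mem_erase.mp hχ).1
        show ‖∑ q ∈ A ×ˢ A, χ (q.1 * q.2 + lam)‖ ≤ Real.sqrt p * n
        rw [Finset.sum_product]
        exact ffupb_vinogradov χ hχ1 hlam hA0
      have hcarderase : ((Sd (D S)).erase 1).card = D S - 1 := by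
        rw [Finset.card_erase_of_mem, hSd, (horth S).1]
        rw [hSd]
        exact Finset.mem_filter.mpr ⟨mem_univ _, one_pow _⟩
      have hEn : ‖∑ χ ∈ (Sd (D S)).erase 1, V χ‖ ≤ ((D S - 1 : ℕ) : ℝ) * (Real.sqrt p * n) := by
        refine le_trans (norm_sum_le _ _) ?_
        have := Finset.sum_le_card_nsmul _ _ _ hVb
        rw [hcarderase, nsmul_eq_mul] at this
        exact this
      have hDpos : (0 : ℝ) < (D S : ℝ) := by
        exact_mod_cast Nat.pos_of_ne_zero (hD0 S)
      have hD1 : ((D S - 1 : ℕ) : ℝ) ≤ (D S : ℝ) := by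
        have : (D S - 1 : ℕ) ≤ D S := Nat.sub_le _ _
        exact_mod_cast this
      calc (D S : ℝ)⁻¹ * ‖∑ χ ∈ (Sd (D S)).erase 1, V χ‖
          ≤ (D S : ℝ)⁻¹ * (((D S - 1 : ℕ) : ℝ) * (Real.sqrt p * n)) := by
            apply mul_le_mul_of_nonneg_left hEn (by positivity)
        _ ≤ (D S : ℝ)⁻¹ * ((D S : ℝ) * (Real.sqrt p * n)) := by
            apply mul_le_mul_of_nonneg_left _ (by positivity)
            apply mul_le_mul_of_nonneg_right hD1 (by positivity)
        _ = Real.sqrt p * n := by field_simp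
    refine le_trans (Finset.sum_le_card_nsmul _ _ _ hterm) ?_
    rw [Finset.card_powerset, Finset.card_univ, Fintype.card_fin, nsmul_eq_mul]
    push_cast
    exact le_refl _
  -- put the real parts together
  set r : ℝ := (n : ℝ) ^ 2 - P * ((n : ℝ) ^ 2 - Z) - T with hr
  have hrE : (r : ℂ) = Esum := by
    rw [hr]
    push_cast
    rw [hmain]
    ring
  have hrabs : |r| ≤ 2 ^ m * (Real.sqrt p * n) := by
    rw [← Real.norm_eq_abs, ← Complex.norm_real, hrE]
    exact hEbound
  have hfinal : P * (n : ℝ) ^ 2 ≤ (2 + 2 ^ m * Real.sqrt p) * n := by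
    have h1 : -r ≤ |r| := neg_le_abs r
    nlinarith [hPpos, hPle1, hZn, hTlow, hrabs]
  have hfinal2 : P * n ≤ 2 + 2 ^ m * Real.sqrt p := by
    have hn1' : (0 : ℝ) < n := by exact_mod_cast hn1
    have hcn : (n : ℝ) ≠ 0 := hn1'.ne'
    calc P * n = P * (n : ℝ) ^ 2 * (n : ℝ)⁻¹ := by
          rw [pow_two, ← mul_assoc, mul_assoc (P * (n : ℝ)), mul_inv_cancel₀ hcn, mul_one]
      _ ≤ (2 + 2 ^ m * Real.sqrt p) * n * (n : ℝ)⁻¹ :=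
          mul_le_mul_of_nonneg_right hfinal (inv_pos.mpr hn1').le
      _ = 2 + 2 ^ m * Real.sqrt p := by rw [mul_assoc, mul_inv_cancel₀ hcn, mul_one]
  have hlast : (n : ℝ) ≤ (2 + 2 ^ m * Real.sqrt p) / P := by
    rw [le_div_iff₀ hPpos]
    linarith [hfinal2]
  calc (n : ℝ) ≤ (2 + 2 ^ m * Real.sqrt p) / P := hlast
    _ = (2 ^ m * Real.sqrt p + 2) * P⁻¹ := by rw [div_eq_mul_inv]; ring
end

section
/- Let k ≥ 4 and n a nonzero integer. Suppose that for all integers a_1 < a_2 ≤ b_1 < b_2 < b_3 with 2|n|^{17} ≤ b_1, it is not the case that a_i·b_j + n is a perfect k-th power for all i ∈ {1,2}, j ∈ {1,2,3}. Then for any finite sets A, B of positive integers contained in [2|n|^{17}, ∞) with |A| ≤ |B|, the number of pairs (a,b) ∈ A×B with ab+n a perfect k-th power is at most 7·|B|·|A|^{1/2}. -/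
open Finset
open scoped Classical

/-- Extract three increasing elements from a finset of naturals with at least 3 elements. -/
lemma exists_three_lt {s : Finset ℕ} (h : 3 ≤ s.card) :
    ∃ b₁ ∈ s, ∃ b₂ ∈ s, ∃ b₃ ∈ s, b₁ < b₂ ∧ b₂ < b₃ := by
  have h1 : s.Nonempty := Finset.card_pos.mp (by omega)
  have hb₁mem := s.min'_mem h1
  set b₁ := s.min' h1 with hb₁
  have h2 : (s.erase b₁).Nonempty := by
    rw [← Finset.card_pos, Finset.card_erase_of_mem hb₁mem]; omega
  have hb₂mem := (s.erase b₁).min'_mem h2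
  set b₂ := (s.erase b₁).min' h2 with hb₂
  have h3 : ((s.erase b₁).erase b₂).Nonempty := by
    rw [← Finset.card_pos, Finset.card_erase_of_mem hb₂mem,
      Finset.card_erase_of_mem hb₁mem]; omega
  have hb₃mem := ((s.erase b₁).erase b₂).min'_mem h3
  set b₃ := ((s.erase b₁).erase b₂).min' h3 with hb₃
  refine ⟨b₁, hb₁mem, b₂, Finset.mem_of_mem_erase hb₂mem, b₃,
    Finset.mem_of_mem_erase (Finset.mem_of_mem_erase hb₃mem), ?_, ?_⟩
  · have h4 := s.min'_le b₂ (Finset.mem_of_mem_erase hb₂mem)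
    have h5 := Finset.ne_of_mem_erase hb₂mem
    omega
  · have h4 := (s.erase b₁).min'_le b₃ (Finset.mem_of_mem_erase hb₃mem)
    have h5 := Finset.ne_of_mem_erase hb₃mem
    omega

/-- Generic ordered Kővári–Sós–Turán-type bound: if `E` is a set of pairs from
`A × B` all satisfying a relation `R`, and every pair of distinct left vertices has
at most 2 common right neighbours (w.r.t. `R`), then
`|E| ≤ |B| + √2 · |A| · √|B|`. -/
lemma kst_bound (R : ℕ → ℕ → Prop) (A B : Finset ℕ) (E : Finset (ℕ × ℕ))
    (hE : ∀ q ∈ E, q.1 ∈ A ∧ q.2 ∈ B ∧ R q.1 q.2)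
    (hcap : ∀ a₁ a₂ : ℕ, a₁ ≠ a₂ → ∀ s : Finset ℕ, s ⊆ B →
      (∀ b ∈ s, R a₁ b ∧ R a₂ b) → s.card ≤ 2) :
    (E.card : ℝ) ≤ (B.card : ℝ) + Real.sqrt 2 * (A.card : ℝ) * Real.sqrt (B.card : ℝ) := by
  classical
  set F : ℕ → Finset ℕ := fun b => A.filter (fun a => (a, b) ∈ E) with hF
  -- edge count as sum of degrees over B
  have hmemF : ∀ a b, a ∈ F b ↔ (a ∈ A ∧ (a, b) ∈ E) := by
    intro a b; rw [hF]; simp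
  have hcard : E.card = ∑ b ∈ B, (F b).card := by
    rw [Finset.card_eq_sum_card_fiberwise (f := Prod.snd) (t := B)
      (fun q hq => (hE q hq).2.1)]
    refine Finset.sum_congr rfl fun b hb => ?_
    refine Finset.card_nbij' (fun q => q.1) (fun a => (a, b)) ?_ ?_ ?_ ?_
    · intro q hq
      rw [Finset.mem_coe, Finset.mem_filter] at hq
      rw [Finset.mem_coe, hmemF]
      exact ⟨(hE q hq.1).1, hq.2 ▸ hq.1⟩
    · intro a ha
      rw [Finset.mem_coe, hmemF] at ha
      rw [Finset.mem_coe, Finset.mem_filter]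
      exact ⟨ha.2, rfl⟩
    · intro q hq
      rw [Finset.mem_coe, Finset.mem_filter] at hq
      exact Prod.ext rfl hq.2.symm
    · intro a ha; rfl
  -- pair counting
  have hpairs : ∑ b ∈ B, (F b).offDiag.card ≤ 2 * (A.card * A.card) := by
    rw [← Finset.card_sigma]
    set S := B.sigma (fun b => (F b).offDiag) with hS
    have himg : S.image (fun p => p.2) ⊆ A.offDiag := by
      intro y hy
      obtain ⟨p, hp, rfl⟩ := Finset.mem_image.mp hy
      rw [hS, Finset.mem_sigma] at hp
      have h2 := hp.2
      rw [Finset.mem_offDiag] at h2 ⊢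
      exact ⟨((hmemF _ _).mp h2.1).1, ((hmemF _ _).mp h2.2.1).1, h2.2.2⟩
    have hfib : ∀ y ∈ S.image (fun p => p.2),
        (S.filter (fun p => p.2 = y)).card ≤ 2 := by
      intro y hy
      obtain ⟨p₀, hp₀, hp₀y⟩ := Finset.mem_image.mp hy
      rw [hS, Finset.mem_sigma, Finset.mem_offDiag] at hp₀
      have hne : y.1 ≠ y.2 := by rw [← hp₀y]; exact hp₀.2.2.2
      calc (S.filter (fun p => p.2 = y)).card
          = ((S.filter (fun p => p.2 = y)).image (fun p => p.1)).card := by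
            refine (Finset.card_image_of_injOn ?_).symm
            intro p hp q hq hpq
            simp only [Finset.mem_coe, Finset.mem_filter] at hp hq
            exact Sigma.ext hpq (heq_of_eq (hp.2.trans hq.2.symm))
        _ ≤ 2 := by
            refine hcap y.1 y.2 hne _ ?_ ?_
            · intro b hbm
              obtain ⟨p, hp, rfl⟩ := Finset.mem_image.mp hbm
              rw [Finset.mem_filter, hS, Finset.mem_sigma, Finset.mem_offDiag] at hp
              exact hp.1.1
            · intro b hbm
              obtain ⟨p, hp, rfl⟩ := Finset.mem_image.mp hbm
              rw [Finset.mem_filter, hS, Finset.mem_sigma, Finset.mem_offDiag] at hp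
              obtain ⟨⟨hpB, h1, h2, _⟩, hpy⟩ := hp
              rw [hpy] at h1 h2
              exact ⟨(hE _ ((hmemF _ _).mp h1).2).2.2,
                (hE _ ((hmemF _ _).mp h2).2).2.2⟩
    calc S.card ≤ 2 * (S.image (fun p => p.2)).card :=
          Finset.card_le_mul_card_image S 2 hfib
      _ ≤ 2 * A.offDiag.card :=
          Nat.mul_le_mul_left 2 (Finset.card_le_card himg)
      _ ≤ 2 * (A.card * A.card) := by
          rw [Finset.offDiag_card]; omega
  -- per-vertex real inequality
  have hreal : ∀ b ∈ B, ((F b).card : ℝ)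
      ≤ 1 + Real.sqrt ((F b).offDiag.card : ℝ) := by
    intro b _
    set d := (F b).card with hd
    rcases Nat.eq_zero_or_pos d with h0 | h1
    · have hnn := Real.sqrt_nonneg ((F b).offDiag.card : ℝ)
      rw [h0]
      push_cast
      linarith
    · have hx : ((F b).offDiag.card : ℝ) = (d : ℝ) * d - d := by
        rw [Finset.offDiag_card, ← hd]
        have hdd : d ≤ d * d := Nat.le_mul_of_pos_left d h1
        push_cast [Nat.cast_sub hdd]
        ring
      have hds : (1 : ℝ) ≤ (d : ℝ) := by exact_mod_cast h1
      have hle : ((d : ℝ) - 1) ≤ Real.sqrt ((F b).offDiag.card : ℝ) := by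
        rw [hx]
        have h2 : ((d : ℝ) - 1) ^ 2 ≤ (d : ℝ) * d - d := by nlinarith
        calc ((d : ℝ) - 1) = Real.sqrt (((d : ℝ) - 1) ^ 2) := by
              rw [Real.sqrt_sq (by linarith)]
          _ ≤ Real.sqrt ((d : ℝ) * d - d) := Real.sqrt_le_sqrt h2
      linarith
  -- Cauchy-Schwarz
  have hCS : ∑ b ∈ B, Real.sqrt ((F b).offDiag.card : ℝ)
      ≤ Real.sqrt ((B.card : ℝ) * ∑ b ∈ B, ((F b).offDiag.card : ℝ)) := by
    have h1 : (∑ b ∈ B, Real.sqrt ((F b).offDiag.card : ℝ)) ^ 2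
        ≤ (∑ _b ∈ B, (1:ℝ) ^ 2) * ∑ b ∈ B, Real.sqrt ((F b).offDiag.card : ℝ) ^ 2 := by
      have := Finset.sum_mul_sq_le_sq_mul_sq B (fun _ => (1:ℝ))
        (fun b => Real.sqrt ((F b).offDiag.card : ℝ))
      simpa using this
    have h2 : (∑ _b ∈ B, (1:ℝ) ^ 2) * ∑ b ∈ B, Real.sqrt ((F b).offDiag.card : ℝ) ^ 2
        = (B.card : ℝ) * ∑ b ∈ B, ((F b).offDiag.card : ℝ) := by
      have e1 : (∑ _b ∈ B, (1:ℝ) ^ 2) = (B.card : ℝ) := by simp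
      have e2 : (∑ b ∈ B, Real.sqrt ((F b).offDiag.card : ℝ) ^ 2)
          = ∑ b ∈ B, ((F b).offDiag.card : ℝ) :=
        Finset.sum_congr rfl fun b _ => Real.sq_sqrt (by positivity)
      rw [e1, e2]
    have h3 := h1.trans_eq h2
    calc ∑ b ∈ B, Real.sqrt ((F b).offDiag.card : ℝ)
        = Real.sqrt ((∑ b ∈ B, Real.sqrt ((F b).offDiag.card : ℝ)) ^ 2) := by
          rw [Real.sqrt_sq (Finset.sum_nonneg fun b _ => Real.sqrt_nonneg _)]
      _ ≤ Real.sqrt ((B.card : ℝ) * ∑ b ∈ B, ((F b).offDiag.card : ℝ)) :=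
          Real.sqrt_le_sqrt h3
  -- combine
  have hsum : (∑ b ∈ B, ((F b).offDiag.card : ℝ)) ≤ 2 * (A.card : ℝ) * A.card := by
    calc (∑ b ∈ B, ((F b).offDiag.card : ℝ))
        = ((∑ b ∈ B, (F b).offDiag.card : ℕ) : ℝ) := by push_cast; rfl
      _ ≤ ((2 * (A.card * A.card) : ℕ) : ℝ) := by exact_mod_cast hpairs
      _ = 2 * (A.card : ℝ) * A.card := by push_cast; ring
  calc (E.card : ℝ)
      = ∑ b ∈ B, ((F b).card : ℝ) := by exact_mod_cast hcard
    _ ≤ ∑ b ∈ B, (1 + Real.sqrt ((F b).offDiag.card : ℝ)) :=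
        Finset.sum_le_sum hreal
    _ = (B.card : ℝ) + ∑ b ∈ B, Real.sqrt ((F b).offDiag.card : ℝ) := by
        rw [Finset.sum_add_distrib, Finset.sum_const, nsmul_eq_mul, mul_one]
    _ ≤ (B.card : ℝ) + Real.sqrt ((B.card : ℝ) * ∑ b ∈ B, ((F b).offDiag.card : ℝ)) := by
        linarith [hCS]
    _ ≤ (B.card : ℝ) + Real.sqrt ((B.card : ℝ) * (2 * (A.card : ℝ) * A.card)) := by
        have hmul : (B.card : ℝ) * ∑ b ∈ B, ((F b).offDiag.card : ℝ)
            ≤ (B.card : ℝ) * (2 * (A.card : ℝ) * A.card) :=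
          mul_le_mul_of_nonneg_left hsum (by positivity)
        linarith [Real.sqrt_le_sqrt hmul]
    _ = (B.card : ℝ) + Real.sqrt 2 * (A.card : ℝ) * Real.sqrt (B.card : ℝ) := by
        rw [show (B.card : ℝ) * (2 * (A.card : ℝ) * A.card)
            = 2 * ((A.card : ℝ) * A.card) * B.card by ring,
          Real.sqrt_mul (by positivity), Real.sqrt_mul (by norm_num),
          Real.sqrt_mul_self (by positivity)]
        try ring

set_option maxHeartbeats 1000000 in
/-- Proposition bounding the number of Diophantine pairs between two sets of large
elements, `k ≥ 4` case. Assuming the non-existence of ordered `K_{2,3}`-type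
configurations with `b_1 ≥ 2|n|^{17}`, any finite sets `A, B` of positive integers
contained in `[2|n|^{17}, ∞)` with `|A| ≤ |B|` have at most `7·|B|·|A|^{1/2}` pairs
`(a,b)` with `ab + n` a perfect `k`-th power. -/
theorem pairs_bound_large_elements (k : ℕ) (hk : 4 ≤ k) (n : ℤ) (hn : n ≠ 0)
    (hyp : ∀ a₁ a₂ b₁ b₂ b₃ : ℤ, a₁ < a₂ → a₂ ≤ b₁ → b₁ < b₂ → b₂ < b₃ →
      2 * |n| ^ 17 ≤ b₁ →
      ¬ ((∃ x : ℕ, 0 < x ∧ a₁ * b₁ + n = (x : ℤ) ^ k) ∧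
         (∃ x : ℕ, 0 < x ∧ a₁ * b₂ + n = (x : ℤ) ^ k) ∧
         (∃ x : ℕ, 0 < x ∧ a₁ * b₃ + n = (x : ℤ) ^ k) ∧
         (∃ x : ℕ, 0 < x ∧ a₂ * b₁ + n = (x : ℤ) ^ k) ∧
         (∃ x : ℕ, 0 < x ∧ a₂ * b₂ + n = (x : ℤ) ^ k) ∧
         (∃ x : ℕ, 0 < x ∧ a₂ * b₃ + n = (x : ℤ) ^ k)))
    (A B : Finset ℕ) (hA : ∀ a ∈ A, 0 < a ∧ 2 * |n| ^ 17 ≤ (a : ℤ))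
    (hB : ∀ b ∈ B, 0 < b ∧ 2 * |n| ^ 17 ≤ (b : ℤ)) (hAB : A.card ≤ B.card) :
    (((A ×ˢ B).filter (fun q : ℕ × ℕ =>
        ∃ x : ℕ, 0 < x ∧ (q.1 : ℤ) * q.2 + n = (x : ℤ) ^ k)).card : ℝ) ≤
      7 * (B.card : ℝ) * Real.sqrt (A.card : ℝ) := by
  classical
  rcases A.eq_empty_or_nonempty with rfl | hAne
  · simp
  set P : ℕ → ℕ → Prop := fun a b => ∃ x : ℕ, 0 < x ∧ (a : ℤ) * b + n = (x : ℤ) ^ k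
    with hP
  -- core configuration lemma: pairs of A-vertices
  have hcapA : ∀ a₁ a₂ : ℕ, a₁ ≠ a₂ → ∀ s : Finset ℕ, s ⊆ B →
      (∀ b ∈ s, (P a₁ b ∧ a₁ ≤ b) ∧ (P a₂ b ∧ a₂ ≤ b)) → s.card ≤ 2 := by
    intro a₁ a₂ hne s hsB hs
    by_contra hcon
    push_neg at hcon
    obtain ⟨b₁, hm₁, b₂, hm₂, b₃, hm₃, h12, h23⟩ := exists_three_lt hcon
    have hb₁ : b₁ ∈ B ∧ _ := ⟨hsB hm₁, hs b₁ hm₁⟩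
    have hb₂ : b₂ ∈ B ∧ _ := ⟨hsB hm₂, hs b₂ hm₂⟩
    have hb₃ : b₃ ∈ B ∧ _ := ⟨hsB hm₃, hs b₃ hm₃⟩
    have hlow := (hB b₁ hb₁.1).2
    rcases hne.lt_or_gt with hlt | hlt
    · exact hyp a₁ a₂ b₁ b₂ b₃ (by exact_mod_cast hlt)
        (by exact_mod_cast hb₁.2.2.2) (by exact_mod_cast h12) (by exact_mod_cast h23)
        hlow ⟨hb₁.2.1.1, hb₂.2.1.1, hb₃.2.1.1, hb₁.2.2.1, hb₂.2.2.1, hb₃.2.2.1⟩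
    · exact hyp a₂ a₁ b₁ b₂ b₃ (by exact_mod_cast hlt)
        (by exact_mod_cast hb₁.2.1.2) (by exact_mod_cast h12) (by exact_mod_cast h23)
        hlow ⟨hb₁.2.2.1, hb₂.2.2.1, hb₃.2.2.1, hb₁.2.1.1, hb₂.2.1.1, hb₃.2.1.1⟩
  -- core configuration lemma: pairs of B-vertices
  have hcapB : ∀ b₁ b₂ : ℕ, b₁ ≠ b₂ → ∀ s : Finset ℕ, s ⊆ A →
      (∀ a ∈ s, (P a b₁ ∧ b₁ < a) ∧ (P a b₂ ∧ b₂ < a)) → s.card ≤ 2 := by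
    intro b₁ b₂ hne s hsA hs
    by_contra hcon
    push_neg at hcon
    obtain ⟨a₁, hm₁, a₂, hm₂, a₃, hm₃, h12, h23⟩ := exists_three_lt hcon
    have ha₁ : a₁ ∈ A ∧ _ := ⟨hsA hm₁, hs a₁ hm₁⟩
    have ha₂ : a₂ ∈ A ∧ _ := ⟨hsA hm₂, hs a₂ hm₂⟩
    have ha₃ : a₃ ∈ A ∧ _ := ⟨hsA hm₃, hs a₃ hm₃⟩
    have hlow := (hA a₁ ha₁.1).2
    have hcomm : ∀ (b a : ℕ), P a b →
        ∃ x : ℕ, 0 < x ∧ (b : ℤ) * a + n = (x : ℤ) ^ k := by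
      intro b a hab
      obtain ⟨x, hx, hxe⟩ := hab
      exact ⟨x, hx, by rw [mul_comm]; exact hxe⟩
    rcases hne.lt_or_gt with hlt | hlt
    · exact hyp b₁ b₂ a₁ a₂ a₃ (by exact_mod_cast hlt)
        (by exact_mod_cast ha₁.2.2.2.le) (by exact_mod_cast h12) (by exact_mod_cast h23)
        hlow
        ⟨hcomm _ _ ha₁.2.1.1, hcomm _ _ ha₂.2.1.1, hcomm _ _ ha₃.2.1.1,
         hcomm _ _ ha₁.2.2.1, hcomm _ _ ha₂.2.2.1, hcomm _ _ ha₃.2.2.1⟩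
    · exact hyp b₂ b₁ a₁ a₂ a₃ (by exact_mod_cast hlt)
        (by exact_mod_cast ha₁.2.1.2.le) (by exact_mod_cast h12) (by exact_mod_cast h23)
        hlow
        ⟨hcomm _ _ ha₁.2.2.1, hcomm _ _ ha₂.2.2.1, hcomm _ _ ha₃.2.2.1,
         hcomm _ _ ha₁.2.1.1, hcomm _ _ ha₂.2.1.1, hcomm _ _ ha₃.2.1.1⟩
  -- split edge set
  set E := (A ×ˢ B).filter (fun q : ℕ × ℕ => P q.1 q.2) with hE
  have hmemE : ∀ q : ℕ × ℕ, q ∈ E ↔ (q.1 ∈ A ∧ q.2 ∈ B ∧ P q.1 q.2) := by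
    intro q
    rw [hE, Finset.mem_filter, Finset.mem_product]
    tauto
  have hsplit := Finset.card_filter_add_card_filter_not
    (s := E) (p := fun q : ℕ × ℕ => q.1 ≤ q.2)
  -- first piece
  have h₁ : ((E.filter (fun q : ℕ × ℕ => q.1 ≤ q.2)).card : ℝ)
      ≤ (B.card : ℝ) + Real.sqrt 2 * (A.card : ℝ) * Real.sqrt (B.card : ℝ) := by
    refine kst_bound (fun a b => P a b ∧ a ≤ b) A B _ ?_ ?_
    · intro q hq
      rw [Finset.mem_filter, hmemE] at hq
      exact ⟨hq.1.1, hq.1.2.1, hq.1.2.2, hq.2⟩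
    · exact hcapA
  -- second piece via swap
  have h₂ : ((E.filter (fun q : ℕ × ℕ => ¬ q.1 ≤ q.2)).card : ℝ)
      ≤ (A.card : ℝ) + Real.sqrt 2 * (B.card : ℝ) * Real.sqrt (A.card : ℝ) := by
    have hswap : (E.filter (fun q : ℕ × ℕ => ¬ q.1 ≤ q.2)).card
        = ((E.filter (fun q : ℕ × ℕ => ¬ q.1 ≤ q.2)).image Prod.swap).card :=
      (Finset.card_image_of_injective _ Prod.swap_injective).symm
    rw [hswap]
    refine kst_bound (fun b a => P a b ∧ b < a) B A _ ?_ ?_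
    · intro q hq
      rw [Finset.mem_image] at hq
      obtain ⟨p, hp, rfl⟩ := hq
      rw [Finset.mem_filter, hmemE] at hp
      exact ⟨hp.1.2.1, hp.1.1, hp.1.2.2, by
        simpa using Nat.lt_of_not_le hp.2⟩
    · exact hcapB
  -- final arithmetic
  have hAcard : (1 : ℝ) ≤ (A.card : ℝ) := by
    have := Finset.card_pos.mpr hAne
    exact_mod_cast this
  have hABr : (A.card : ℝ) ≤ (B.card : ℝ) := by exact_mod_cast hAB
  set sa := Real.sqrt (A.card : ℝ) with hsa
  set sb := Real.sqrt (B.card : ℝ) with hsb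
  set s2 := Real.sqrt 2 with hs2
  have hsa2 : sa * sa = (A.card : ℝ) := Real.mul_self_sqrt (by positivity)
  have hsb2 : sb * sb = (B.card : ℝ) := Real.mul_self_sqrt (by positivity)
  have hs22 : s2 * s2 = 2 := Real.mul_self_sqrt (by norm_num)
  have hsa0 : 0 ≤ sa := Real.sqrt_nonneg _
  have hsb0 : 0 ≤ sb := Real.sqrt_nonneg _
  have hs20 : 0 ≤ s2 := Real.sqrt_nonneg _
  have hsa1 : 1 ≤ sa := by
    rw [hsa, show (1:ℝ) = Real.sqrt 1 by simp]
    exact Real.sqrt_le_sqrt hAcard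
  have hsasb : sa ≤ sb := Real.sqrt_le_sqrt hABr
  have hs2le : s2 ≤ 1.5 := by nlinarith [sq_nonneg (s2 - 1.5)]
  have hB0 : (0:ℝ) ≤ (B.card : ℝ) := by positivity
  have t1 : (B.card : ℝ) ≤ (B.card : ℝ) * sa := by nlinarith
  have t2 : (A.card : ℝ) ≤ (B.card : ℝ) * sa := by nlinarith
  have t3 : s2 * (A.card : ℝ) * sb ≤ 2 * ((B.card : ℝ) * sa) := by
    have u2 : sa * sb ≤ sb * sb := mul_le_mul_of_nonneg_right hsasb hsb0
    have u3 : s2 * sa * (sa * sb) ≤ s2 * sa * (sb * sb) :=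
      mul_le_mul_of_nonneg_left u2 (mul_nonneg hs20 hsa0)
    have u4 : s2 * sa * (sb * sb) ≤ 2 * sa * (sb * sb) := by
      have hs2two : s2 ≤ 2 := by linarith
      have hnn : (0:ℝ) ≤ sa * (sb * sb) := by positivity
      nlinarith
    calc s2 * (A.card : ℝ) * sb = s2 * sa * (sa * sb) := by rw [← hsa2]; ring
      _ ≤ s2 * sa * (sb * sb) := u3
      _ ≤ 2 * sa * (sb * sb) := u4
      _ = 2 * ((B.card : ℝ) * sa) := by rw [hsb2]; ring
  have t4 : s2 * (B.card : ℝ) * sa ≤ 2 * ((B.card : ℝ) * sa) := by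
    have hnn : (0:ℝ) ≤ (B.card : ℝ) * sa := mul_nonneg hB0 hsa0
    nlinarith
  have hBsa : (0:ℝ) ≤ (B.card : ℝ) * sa := mul_nonneg hB0 hsa0
  have hcast : (E.card : ℝ)
      = ((E.filter (fun q : ℕ × ℕ => q.1 ≤ q.2)).card : ℝ)
      + ((E.filter (fun q : ℕ × ℕ => ¬ q.1 ≤ q.2)).card : ℝ) := by
    exact_mod_cast (congrArg (fun m : ℕ => (m : ℝ)) hsplit).symm
  calc (E.card : ℝ)
      = ((E.filter (fun q : ℕ × ℕ => q.1 ≤ q.2)).card : ℝ)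
        + ((E.filter (fun q : ℕ × ℕ => ¬ q.1 ≤ q.2)).card : ℝ) := hcast
    _ ≤ ((B.card : ℝ) + s2 * (A.card : ℝ) * sb)
        + ((A.card : ℝ) + s2 * (B.card : ℝ) * sa) := by linarith [h₁, h₂]
    _ ≤ 7 * (B.card : ℝ) * sa := by linarith [t1, t2, t3, t4, hBsa]
end
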